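/- arXiv:1501.01257 — 6 statements merged into one kernel-verified Lean document; each statement's English description precedes it below -/
import Mathlib

section
/- Let Ω be an open set in ℝⁿ (n ≥ 2) and x ∈ Ω. Then the set (∂Ω)ₓ = {y ∈ ∂Ω : (1−t)x + ty ∈ Ω for every t ∈ (0,1)} is a Borel measurable subset of ℝⁿ. -/
open Set

theorem aux_segment_open {E : Type*} [NormedAddCommGroup E] [NormedSpace ℝ E]
    {Ω : Set E} (hΩ : IsOpen Ω) (x : E) :
    IsOpen {z : E | segment ℝ x z ⊆ Ω} := by
  rw [Metric.isOpen_iff]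
  intro z hz
  have hK : IsCompact (segment ℝ x z) := by
    rw [segment_eq_image ℝ x z]
    exact isCompact_Icc.image (by continuity)
  obtain ⟨δ, hδ, hsub⟩ := hK.exists_thickening_subset_open hΩ hz
  refine ⟨δ, hδ, ?_⟩
  intro z' hz' p hp
  obtain ⟨a, b, ha, hb, hab, rfl⟩ := hp
  apply hsub
  rw [Metric.mem_thickening_iff]
  refine ⟨a • x + b • z, ⟨a, b, ha, hb, hab, rfl⟩, ?_⟩
  have hd : dist (a • x + b • z') (a • x + b • z) = b * dist z' z := by
    simp [dist_eq_norm, ← smul_sub, norm_smul, abs_of_nonneg hb]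
  rw [hd]
  calc b * dist z' z ≤ 1 * dist z' z := by
        apply mul_le_mul_of_nonneg_right _ dist_nonneg
        linarith
    _ < δ := by rwa [one_mul, ← Metric.mem_ball]

/-- Let Ω be an open set in ℝⁿ (n ≥ 2) and x ∈ Ω. Then the set
(∂Ω)ₓ = {y ∈ ∂Ω : (1−t)x + ty ∈ Ω for every t ∈ (0,1)} is Borel measurable. -/
theorem stmt0 {n : ℕ} (hn : 2 ≤ n) (Ω : Set (EuclideanSpace ℝ (Fin n)))
    (hΩ : IsOpen Ω) (x : EuclideanSpace ℝ (Fin n)) (hx : x ∈ Ω) :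
    MeasurableSet {y : EuclideanSpace ℝ (Fin n) |
      y ∈ frontier Ω ∧ ∀ t ∈ Ioo (0:ℝ) 1, (1 - t) • x + t • y ∈ Ω} := by
  have key : {y : EuclideanSpace ℝ (Fin n) |
      y ∈ frontier Ω ∧ ∀ t ∈ Ioo (0:ℝ) 1, (1 - t) • x + t • y ∈ Ω}
      = frontier Ω ∩ ⋂ (q : ℚ) (_ : (q : ℝ) ∈ Ioo (0:ℝ) 1),
        (fun y : EuclideanSpace ℝ (Fin n) => (1 - (q:ℝ)) • x + (q:ℝ) • y) ⁻¹'
          {z | segment ℝ x z ⊆ Ω} := by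
    ext y
    simp only [mem_setOf_eq, mem_inter_iff, mem_iInter, mem_preimage, and_congr_right_iff]
    intro _
    constructor
    · intro h q hq p hp
      obtain ⟨a, b, ha, hb, hab, rfl⟩ := hp
      have hqy : (1 - (q:ℝ)) • x + (q:ℝ) • y = x + (q:ℝ) • (y - x) := by
        module
      have heq : a • x + b • ((1 - (q:ℝ)) • x + (q:ℝ) • y)
          = (1 - b * (q:ℝ)) • x + (b * (q:ℝ)) • y := by
        rw [show a = 1 - b by linarith]; module
      rw [heq]
      rcases eq_or_lt_of_le hb with hb0 | hb0
      · rw [← hb0]; simpa using hx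
      · apply h
        constructor
        · exact mul_pos hb0 hq.1
        · nlinarith [hq.1, hq.2]
    · intro h t ht
      obtain ⟨q, hq1, hq2⟩ := exists_rat_btwn ht.2
      have hq0 : (0:ℝ) < q := lt_trans ht.1 hq1
      have hqIoo : (q : ℝ) ∈ Ioo (0:ℝ) 1 := ⟨hq0, hq2⟩
      have := h q hqIoo
      apply this
      refine ⟨1 - t / q, t / q, ?_, ?_, by ring, ?_⟩
      · have : t / q ≤ 1 := by
          rw [div_le_one hq0]; exact hq1.le
        linarith
      · exact div_nonneg ht.1.le hq0.le
      · have hq0' : (q:ℝ) ≠ 0 := ne_of_gt hq0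
        match_scalars <;> (field_simp; try ring)
  rw [key]
  apply MeasurableSet.inter
  · exact isClosed_frontier.measurableSet
  · apply MeasurableSet.iInter
    intro q
    apply MeasurableSet.iInter
    intro hq
    exact ((aux_segment_open hΩ x).preimage (continuous_const.add (continuous_id.const_smul ((q:ℝ))))).measurableSet
end

section
/- Let x ∈ ℝⁿ, n ≥ 2, and let E ⊆ ℝⁿ be a Borel set with x ∉ E. Let Π(y) = (y−x)/|y−x|. Then H^{n−1}(Π(E)) ≤ 2ⁿ ∫_E |x−y|^{−(n−1)} dH^{n−1}(y). -/
open Set MeasureTheory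

open scoped RealInnerProductSpace ENNReal NNReal

/-!
In an inner product space the radial projection `y ↦ (y - x)/‖y - x‖` is `r⁻¹`-Lipschitz on
`{r ≤ ‖y - x‖}`, with no extra constant. On the shell `r ≤ ‖y - x‖ < 2r` it therefore scales
`μH[d]` by at most `r⁻ᵈ ≤ 2ᵈ ‖x - y‖⁻ᵈ`. As `x ∉ E`, the dyadic shells `r = 2ᵏ` partition `E`,
and summing over them gives the bound with constant `2ᵈ`, which is at most `2ⁿ` for `d = n - 1`.
-/

section RadialProjection

variable {F : Type*} [NormedAddCommGroup F] [InnerProductSpace ℝ F]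

theorem norm_inv_norm_smul_sub_inv_norm_smul_le {r : ℝ} (hr : 0 < r) {a b : F}
    (ha : r ≤ ‖a‖) (hb : r ≤ ‖b‖) :
    ‖‖a‖⁻¹ • a - ‖b‖⁻¹ • b‖ ≤ r⁻¹ * ‖a - b‖ := by
  have ha0 : 0 < ‖a‖ := hr.trans_le ha
  have hb0 : 0 < ‖b‖ := hr.trans_le hb
  set u := ‖a‖⁻¹ • a
  set v := ‖b‖⁻¹ • b
  have hu : ‖u‖ = 1 := norm_smul_inv_norm (norm_pos_iff.1 ha0)
  have hv : ‖v‖ = 1 := norm_smul_inv_norm (norm_pos_iff.1 hb0)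
  have huv : ⟪u, v⟫ ≤ 1 := by simpa [hu, hv] using real_inner_le_norm u v
  have hab : ⟪a, b⟫ = ‖a‖ * ‖b‖ * ⟪u, v⟫ := by
    simp only [u, v, real_inner_smul_left, real_inner_smul_right]
    field_simp
  have hrr : r * r ≤ ‖a‖ * ‖b‖ := mul_le_mul ha hb hr.le ha0.le
  -- `‖a - b‖² = (‖a‖ - ‖b‖)² + ‖a‖ ‖b‖ ‖u - v‖²`
  have hsq : (r * ‖u - v‖) ^ 2 ≤ ‖a - b‖ ^ 2 := by
    rw [mul_pow, norm_sub_sq_real, norm_sub_sq_real, hu, hv, hab]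
    nlinarith [sq_nonneg (‖a‖ - ‖b‖), mul_nonneg (sub_nonneg.2 hrr) (sub_nonneg.2 huv)]
  rw [le_inv_mul_iff₀ hr]
  exact (pow_le_pow_iff_left₀ (by positivity) (norm_nonneg _) two_ne_zero).1 hsq

theorem lipschitzOnWith_inv_norm_smul_sub {r : ℝ≥0} (hr : 0 < r) (x : F) :
    LipschitzOnWith r⁻¹ (fun y => ‖y - x‖⁻¹ • (y - x)) {y | (r : ℝ) ≤ ‖y - x‖} := by
  refine LipschitzOnWith.of_dist_le_mul fun y hy z hz => ?_
  rw [dist_eq_norm, dist_eq_norm, NNReal.coe_inv, ← sub_sub_sub_cancel_right y z x]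
  exact norm_inv_norm_smul_sub_inv_norm_smul_le hr hy hz

end RadialProjection

section Shells

variable {F : Type*} [NormedAddCommGroup F]

def shell (x : F) (r : ℝ≥0) : Set F := {y | ‖y - x‖ ∈ Ico (r : ℝ) (2 * r)}

theorem measurableSet_shell [MeasurableSpace F] [OpensMeasurableSpace F] (x : F) (r : ℝ≥0) :
    MeasurableSet (shell x r) :=
  (continuous_id.sub continuous_const).norm.measurable measurableSet_Ico

theorem shell_two_zpow (x : F) (k : ℤ) :
    shell x (2 ^ k) = {y | ‖y - x‖ ∈ Ico ((2 : ℝ) ^ k) (2 ^ (k + 1))} := by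
  simp only [shell, NNReal.coe_zpow, NNReal.coe_ofNat, zpow_add_one₀ (two_ne_zero' ℝ), mul_comm]

theorem pairwise_disjoint_shell_two_zpow (x : F) :
    Pairwise (Function.onFun Disjoint fun k : ℤ => shell x (2 ^ k)) := by
  intro k l hkl
  simp only [Function.onFun, shell_two_zpow, Set.disjoint_left, mem_Ico]
  rintro y ⟨hk, hk'⟩ ⟨hl, hl'⟩
  rcases hkl.lt_or_gt with h | h
  · linarith [zpow_le_zpow_right₀ one_le_two (show k + 1 ≤ l by omega) (a := (2 : ℝ))]
  · linarith [zpow_le_zpow_right₀ one_le_two (show l + 1 ≤ k by omega) (a := (2 : ℝ))]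

theorem iUnion_shell_two_zpow (x : F) : ⋃ k : ℤ, shell x (2 ^ k) = {x}ᶜ := by
  ext y
  simp only [shell_two_zpow, mem_iUnion, mem_compl_singleton_iff]
  constructor
  · rintro ⟨k, hk, -⟩ rfl
    rw [sub_self, norm_zero] at hk
    exact (zpow_pos two_pos k).not_ge hk
  · intro hy
    exact exists_mem_Ico_zpow (norm_pos_iff.2 (sub_ne_zero.2 hy)) one_lt_two

theorem inv_rpow_le_two_rpow_mul_rpow_neg_of_mem_shell {d : ℝ} (hd : 0 ≤ d) {x y : F}
    {r : ℝ≥0} (hy : y ∈ shell x r) :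
    ((r⁻¹ : ℝ≥0) : ℝ≥0∞) ^ d ≤ 2 ^ d * ENNReal.ofReal (‖x - y‖ ^ (-d)) := by
  obtain ⟨hr, hr'⟩ : (r : ℝ) ≤ ‖x - y‖ ∧ ‖x - y‖ < 2 * r := by rwa [norm_sub_rev]
  have hxy : 0 < ‖x - y‖ := by linarith
  have hr0 : (0 : ℝ) < r := by linarith
  rw [← ENNReal.ofReal_coe_nnreal, ← ENNReal.ofReal_ofNat, ENNReal.ofReal_rpow_of_nonneg
    (by positivity) hd, ENNReal.ofReal_rpow_of_nonneg two_pos.le hd,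
    ← ENNReal.ofReal_mul (by positivity)]
  refine ENNReal.ofReal_le_ofReal ?_
  rw [Real.rpow_neg hxy.le, ← Real.inv_rpow hxy.le, ← Real.mul_rpow two_pos.le (by positivity),
    NNReal.coe_inv]
  gcongr
  rw [← div_eq_mul_inv, le_div_iff₀ hxy]
  field_simp
  linarith

end Shells

section HausdorffMeasure

variable {F : Type*} [NormedAddCommGroup F] [InnerProductSpace ℝ F]
  [MeasurableSpace F] [BorelSpace F]

theorem hausdorffMeasure_image_le_of_subset_shell {d : ℝ} (hd : 0 ≤ d) {x : F} {r : ℝ≥0}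
    (hr : 0 < r) {s : Set F} (hs : s ⊆ shell x r) :
    μH[d] ((fun y => ‖y - x‖⁻¹ • (y - x)) '' s) ≤
      2 ^ d * ∫⁻ y in s, ENNReal.ofReal (‖x - y‖ ^ (-d)) ∂μH[d] := by
  have hlip : LipschitzOnWith r⁻¹ (fun y => ‖y - x‖⁻¹ • (y - x)) s :=
    (lipschitzOnWith_inv_norm_smul_sub hr x).mono fun y hy => (hs hy).1
  have hbound : ∀ᵐ y ∂μH[d].restrict s,
      ((r⁻¹ : ℝ≥0) : ℝ≥0∞) ^ d ≤ 2 ^ d * ENNReal.ofReal (‖x - y‖ ^ (-d)) :=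
    ae_restrict_of_ae_restrict_of_subset hs <| ae_restrict_of_forall_mem
      (measurableSet_shell x r) fun y hy => inv_rpow_le_two_rpow_mul_rpow_neg_of_mem_shell hd hy
  calc μH[d] ((fun y => ‖y - x‖⁻¹ • (y - x)) '' s)
      ≤ ((r⁻¹ : ℝ≥0) : ℝ≥0∞) ^ d * μH[d] s := hlip.hausdorffMeasure_image_le hd
    _ = ∫⁻ _ in s, ((r⁻¹ : ℝ≥0) : ℝ≥0∞) ^ d ∂μH[d] := (setLIntegral_const s _).symm
    _ ≤ ∫⁻ y in s, 2 ^ d * ENNReal.ofReal (‖x - y‖ ^ (-d)) ∂μH[d] := lintegral_mono_ae hbound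
    _ = 2 ^ d * ∫⁻ y in s, ENNReal.ofReal (‖x - y‖ ^ (-d)) ∂μH[d] :=
      lintegral_const_mul' _ _ (by simp)

theorem hausdorffMeasure_image_inv_norm_smul_sub_le {d : ℝ} (hd : 0 ≤ d) {x : F} {E : Set F}
    (hx : x ∉ E) :
    μH[d] ((fun y => ‖y - x‖⁻¹ • (y - x)) '' E) ≤
      2 ^ d * ∫⁻ y in E, ENNReal.ofReal (‖x - y‖ ^ (-d)) ∂μH[d] := by
  set g : F → ℝ≥0∞ := fun y => ENNReal.ofReal (‖x - y‖ ^ (-d))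
  have hE_cover : E = ⋃ k : ℤ, shell x (2 ^ k) ∩ E := by
    rw [← iUnion_inter, iUnion_shell_two_zpow, inter_eq_right.2 (subset_compl_singleton_iff.2 hx)]
  calc μH[d] ((fun y => ‖y - x‖⁻¹ • (y - x)) '' E)
      ≤ ∑' k : ℤ, μH[d] ((fun y => ‖y - x‖⁻¹ • (y - x)) '' (shell x (2 ^ k) ∩ E)) := by
        conv_lhs => rw [hE_cover, image_iUnion]
        exact measure_iUnion_le _
    _ ≤ ∑' k : ℤ, 2 ^ d * ∫⁻ y in shell x (2 ^ k) ∩ E, g y ∂μH[d] := ENNReal.tsum_le_tsum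
        fun k => hausdorffMeasure_image_le_of_subset_shell hd (by positivity) inter_subset_left
    _ = 2 ^ d * ∫⁻ y in ⋃ k : ℤ, shell x (2 ^ k), g y ∂μH[d].restrict E := by
        simp only [← Measure.restrict_restrict (measurableSet_shell _ _), ENNReal.tsum_mul_left,
          lintegral_iUnion (fun k => measurableSet_shell x _) (pairwise_disjoint_shell_two_zpow x)]
    _ ≤ 2 ^ d * ∫⁻ y in E, g y ∂μH[d] := by
        gcongr 2 ^ d * ?_
        exact setLIntegral_le_lintegral _ _

end HausdorffMeasure

theorem stmt3_general {n : ℕ} (hn : 2 ≤ n) (x : EuclideanSpace ℝ (Fin n))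
    (E : Set (EuclideanSpace ℝ (Fin n))) (hx : x ∉ E) :
    μH[(n:ℝ) - 1] ((fun y => ‖y - x‖⁻¹ • (y - x)) '' E) ≤
      2 ^ n * ∫⁻ y in E, ENNReal.ofReal (‖x - y‖ ^ (-((n:ℝ) - 1))) ∂(μH[(n:ℝ) - 1]) := by
  have hd : (0 : ℝ) ≤ n - 1 := by
    have : (2 : ℝ) ≤ n := by exact_mod_cast hn
    linarith
  calc _ ≤ 2 ^ ((n : ℝ) - 1) * _ := hausdorffMeasure_image_inv_norm_smul_sub_le hd hx
    _ ≤ 2 ^ n * _ := by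
      gcongr
      rw [← ENNReal.rpow_natCast]
      exact ENNReal.rpow_le_rpow_of_exponent_le one_le_two (by linarith)

/-- For a Borel set E ⊆ ℝⁿ with x ∉ E,
H^{n−1}(Π(E)) ≤ 2ⁿ ∫_E |x−y|^{−(n−1)} dH^{n−1}(y), where Π(y) = (y−x)/|y−x|. -/
theorem stmt3 {n : ℕ} (hn : 2 ≤ n) (x : EuclideanSpace ℝ (Fin n))
    (E : Set (EuclideanSpace ℝ (Fin n))) (hE : MeasurableSet E) (hx : x ∉ E) :
    μH[(n:ℝ) - 1] ((fun y => ‖y - x‖⁻¹ • (y - x)) '' E) ≤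
      2 ^ n * ∫⁻ y in E, ENNReal.ofReal (‖x - y‖ ^ (-((n:ℝ) - 1))) ∂(μH[(n:ℝ) - 1]) :=
  stmt3_general hn x E hx
end

section
/- Let ψ ∈ W^{2ℓ,1}(a,b) with −∞ < a < b < ∞ and ℓ ≥ 1, and suppose ψ^{(k)}(a) = ψ^{(k)}(b) = 0 for k = 0,1,…,ℓ−1. Then for a.e. t ∈ (a,b): ψ^{(2ℓ−1)}(t) = ∫_a^t Q((2τ−a−b)/(b−a)) ψ^{(2ℓ)}(τ) dτ − ∫_t^b Q((a+b−2τ)/(b−a)) ψ^{(2ℓ)}(τ) dτ, where Q is the polynomial of degree 2ℓ−1 satisfying Q(t)+Q(−t)=1 and Q(−1)=Q'(−1)=⋯=Q^{(ℓ−1)}(−1)=0. -/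
/-!
Let `P = Q ∘ L`, where `L` is the affine map sending `a ↦ -1`, `b ↦ 1`. The conditions on `Q`
make `P` a Hermite-type step: `P, P', …, P^{(ℓ-1)}` vanish at `a`, `P(b) = 1` and
`P', …, P^{(ℓ-1)}` vanish at `b`, while `deg P < 2ℓ`. Integrating `∫_a^b P ψ^{(2ℓ)}` by parts
`2ℓ` times, each boundary term `P^{(j)} ψ^{(2ℓ-1-j)}` vanishes at both ends (for `j < ℓ` because
of `P`, for `j ≥ ℓ` because of `ψ`), except `P(b) ψ^{(2ℓ-1)}(b)`. Hence
`∫_a^b P ψ^{(2ℓ)} = ψ^{(2ℓ-1)}(b)`, and since `Q((a+b-2τ)/(b-a)) = 1 - P(τ)` the right-hand side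
equals `∫_a^b P ψ^{(2ℓ)} - ∫_t^b ψ^{(2ℓ)} = ψ^{(2ℓ-1)}(t)`.
-/

open Set MeasureTheory Polynomial intervalIntegral

theorem Polynomial.iterate_derivative_comp_C_mul_X_add_C {R : Type*} [CommRing R]
    (p : R[X]) (k c : R) (j : ℕ) :
    derivative^[j] (p.comp (C k * X + C c)) =
      C (k ^ j) * (derivative^[j] p).comp (C k * X + C c) := by
  induction j generalizing p with
  | zero => simp
  | succ j ih =>
    have hlinear : derivative (C k * X + C c) = C k := by simp
    rw [Function.iterate_succ_apply, Function.iterate_succ_apply, derivative_comp, hlinear,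
      iterate_derivative_C_mul, ih, pow_succ', C_mul, mul_assoc]

theorem Polynomial.iterate_derivative_eval_neg_of_eval_add_eval_neg {Q : ℝ[X]}
    (hQ : ∀ t : ℝ, Q.eval t + Q.eval (-t) = 1) {j : ℕ} (hj : 0 < j) (x : ℝ) :
    (-1) ^ j * (derivative^[j] Q).eval (-x) = -(derivative^[j] Q).eval x := by
  have hcomp : Q.comp (C (-1) * X + C 0) = C 1 - Q :=
    Polynomial.funext fun t => by simp [eq_sub_iff_add_eq', hQ]
  have := congrArg (fun p => eval x (derivative^[j] p)) hcomp
  rw [iterate_derivative_comp_C_mul_X_add_C, iterate_derivative_sub,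
    iterate_derivative_C hj] at this
  simpa using this

theorem intervalIntegral.integral_eval_mul_eq_sub_of_primitive {a b : ℝ} (u : ℝ[X])
    {f v : ℝ → ℝ} (hf : IntervalIntegrable f volume a b)
    (hv : ∀ t ∈ uIcc a b, v t = v a + ∫ s in a..t, f s) :
    ∫ τ in a..b, u.eval τ * f τ =
      u.eval b * v b - u.eval a * v a - ∫ τ in a..b, (derivative u).eval τ * v τ := by
  set g : ℝ → ℝ := fun t => v a + ∫ s in a..t, f s
  have hg : AbsolutelyContinuousOnInterval g a b :=
    (contDiffOn_const.absolutelyContinuousOnInterval).add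
      (hf.absolutelyContinuousOnInterval_intervalIntegral left_mem_uIcc)
  have hu : AbsolutelyContinuousOnInterval u.eval a b := by
    refine ContDiffOn.absolutelyContinuousOnInterval ?_
    simpa using (u.contDiff_aeval (𝕜 := ℝ) 1).contDiffOn
  have hderiv : ∀ᵐ τ, τ ∈ uIcc a b → deriv g τ = f τ := by
    filter_upwards [hf.ae_hasDerivAt_integral] with τ hτ hmem
    exact ((hτ hmem a left_mem_uIcc).const_add (v a)).deriv
  have hvg : EqOn v g (uIcc a b) := hv
  calc ∫ τ in a..b, u.eval τ * f τ = ∫ τ in a..b, u.eval τ * deriv g τ := by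
        refine integral_congr_ae ?_
        filter_upwards [hderiv] with τ hτ hmem
        rw [hτ (uIoc_subset_uIcc hmem)]
    _ = u.eval b * g b - u.eval a * g a - ∫ τ in a..b, deriv u.eval τ * g τ :=
        hu.integral_mul_deriv_eq_deriv_mul hg
    _ = _ := by
        rw [hvg left_mem_uIcc, hvg right_mem_uIcc,
          integral_congr fun τ hτ => congrArg (_ * ·) (hvg hτ).symm]
        simp only [Polynomial.deriv]

theorem intervalIntegral.integral_eval_mul_eq_sum_add {a b : ℝ} (P : ℝ[X]) (n : ℕ)
    {φ : ℕ → ℝ → ℝ} (hint : ∀ k < n, IntervalIntegrable (φ (k + 1)) volume a b)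
    (hprim : ∀ k < n, ∀ t ∈ uIcc a b, φ k t = φ k a + ∫ s in a..t, φ (k + 1) s) :
    ∫ τ in a..b, P.eval τ * φ n τ =
      ∑ j ∈ Finset.range n, (-1) ^ j * ((derivative^[j] P).eval b * φ (n - 1 - j) b
        - (derivative^[j] P).eval a * φ (n - 1 - j) a)
      + (-1) ^ n * ∫ τ in a..b, (derivative^[n] P).eval τ * φ 0 τ := by
  induction n generalizing P with
  | zero => simp
  | succ n ih =>
    have hshift : ∀ j ∈ Finset.range n,
        (-1) ^ (j + 1) * ((derivative^[j + 1] P).eval b * φ (n + 1 - 1 - (j + 1)) b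
          - (derivative^[j + 1] P).eval a * φ (n + 1 - 1 - (j + 1)) a) =
        -((-1) ^ j * ((derivative^[j] (derivative P)).eval b * φ (n - 1 - j) b
          - (derivative^[j] (derivative P)).eval a * φ (n - 1 - j) a)) := fun j _ => by
      rw [show n + 1 - 1 - (j + 1) = n - 1 - j by omega, Function.iterate_succ_apply, pow_succ]
      ring
    rw [integral_eval_mul_eq_sub_of_primitive P (hint n n.lt_succ_self) (hprim n n.lt_succ_self),
      ih (derivative P) (fun k hk => hint k (by omega)) (fun k hk => hprim k (by omega)),
      Finset.sum_range_succ', Finset.sum_congr rfl hshift, Finset.sum_neg_distrib,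
      ← Function.iterate_succ_apply, pow_succ]
    simp only [Function.iterate_zero, id_eq, pow_zero, one_mul, Nat.add_sub_cancel, Nat.sub_zero]
    ring

theorem intervalIntegral.integral_eval_mul_eq_of_hermite {a b : ℝ} {ℓ : ℕ} {P : ℝ[X]}
    (hdeg : P.natDegree < 2 * ℓ) (ha : ∀ j < ℓ, (derivative^[j] P).eval a = 0)
    (hb₀ : P.eval b = 1) (hb : ∀ j, 0 < j → j < ℓ → (derivative^[j] P).eval b = 0)
    {φ : ℕ → ℝ → ℝ} (hint : ∀ k < 2 * ℓ, IntervalIntegrable (φ (k + 1)) volume a b)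
    (hprim : ∀ k < 2 * ℓ, ∀ t ∈ uIcc a b, φ k t = φ k a + ∫ s in a..t, φ (k + 1) s)
    (hφ : ∀ k < ℓ, φ k a = 0 ∧ φ k b = 0) :
    ∫ τ in a..b, P.eval τ * φ (2 * ℓ) τ = φ (2 * ℓ - 1) b := by
  obtain ⟨m, hm⟩ : ∃ m, 2 * ℓ = m + 1 := ⟨2 * ℓ - 1, by omega⟩
  have hboundary : ∀ j ∈ Finset.range m, (-1) ^ (j + 1) *
      ((derivative^[j + 1] P).eval b * φ (m + 1 - 1 - (j + 1)) b
        - (derivative^[j + 1] P).eval a * φ (m + 1 - 1 - (j + 1)) a) = 0 := fun j _ => by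
    rcases lt_or_ge (j + 1) ℓ with hj | hj
    · rw [ha _ hj, hb _ j.succ_pos hj]; ring
    · obtain ⟨hφa, hφb⟩ := hφ (m + 1 - 1 - (j + 1)) (by omega)
      rw [hφa, hφb]; ring
  rw [integral_eval_mul_eq_sum_add P _ hint hprim, iterate_derivative_eq_zero hdeg, hm,
    Finset.sum_range_succ', Finset.sum_eq_zero hboundary]
  have ha₀ : P.eval a = 0 := ha 0 (by omega)
  simp [hb₀, ha₀]

theorem intervalIntegral.eq_integral_sub_integral_of_hermite {a b : ℝ} {ℓ : ℕ} {P : ℝ[X]}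
    (hdeg : P.natDegree < 2 * ℓ) (ha : ∀ j < ℓ, (derivative^[j] P).eval a = 0)
    (hb₀ : P.eval b = 1) (hb : ∀ j, 0 < j → j < ℓ → (derivative^[j] P).eval b = 0)
    {φ : ℕ → ℝ → ℝ} (hint : ∀ k < 2 * ℓ, IntervalIntegrable (φ (k + 1)) volume a b)
    (hprim : ∀ k < 2 * ℓ, ∀ t ∈ uIcc a b, φ k t = φ k a + ∫ s in a..t, φ (k + 1) s)
    (hφ : ∀ k < ℓ, φ k a = 0 ∧ φ k b = 0) {t : ℝ} (ht : t ∈ uIcc a b) :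
    φ (2 * ℓ - 1) t = (∫ τ in a..t, P.eval τ * φ (2 * ℓ) τ)
      - ∫ τ in t..b, (1 - P.eval τ) * φ (2 * ℓ) τ := by
  have hidx : 2 * ℓ - 1 + 1 = 2 * ℓ := by omega
  have hf : IntervalIntegrable (φ (2 * ℓ)) volume a b := hidx ▸ hint _ (by omega)
  have hPf : IntervalIntegrable (fun τ => P.eval τ * φ (2 * ℓ) τ) volume a b :=
    hf.continuousOn_mul P.continuousOn
  have hat : uIcc a t ⊆ uIcc a b := uIcc_subset_uIcc left_mem_uIcc ht
  have htb : uIcc t b ⊆ uIcc a b := uIcc_subset_uIcc ht right_mem_uIcc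
  have hprim_top : ∀ s ∈ uIcc a b, φ (2 * ℓ - 1) s = φ (2 * ℓ - 1) a + ∫ r in a..s, φ (2 * ℓ) r :=
    hidx ▸ hprim _ (by omega)
  have hsplit := integral_add_adjacent_intervals (hPf.mono_set hat) (hPf.mono_set htb)
  have htail := integral_interval_sub_left hf (hf.mono_set hat)
  have hone_sub : ∫ τ in t..b, (1 - P.eval τ) * φ (2 * ℓ) τ =
      (∫ τ in t..b, φ (2 * ℓ) τ) - ∫ τ in t..b, P.eval τ * φ (2 * ℓ) τ := by
    simp only [sub_mul, one_mul]
    exact integral_sub (hf.mono_set htb) (hPf.mono_set htb)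
  rw [integral_eval_mul_eq_of_hermite hdeg ha hb₀ hb hint hprim hφ] at hsplit
  linarith [hprim_top t ht, hprim_top b right_mem_uIcc]

noncomputable def Polynomial.toSymmetricInterval (a b : ℝ) : ℝ[X] :=
  C (2 / (b - a)) * X + C (-(a + b) / (b - a))

section GreenPolynomial

variable {a b : ℝ} {Q : ℝ[X]} {ℓ : ℕ}

theorem Polynomial.eval_toSymmetricInterval (x : ℝ) :
    (toSymmetricInterval a b).eval x = (2 * x - a - b) / (b - a) := by
  simp only [toSymmetricInterval, eval_add, eval_mul, eval_C, eval_X]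
  ring

theorem Polynomial.eval_toSymmetricInterval_left (hab : a ≠ b) :
    (toSymmetricInterval a b).eval a = -1 := by
  rw [eval_toSymmetricInterval]
  field_simp [sub_ne_zero.2 hab.symm]
  ring

theorem Polynomial.eval_toSymmetricInterval_right (hab : a ≠ b) :
    (toSymmetricInterval a b).eval b = 1 := by
  rw [eval_toSymmetricInterval]
  field_simp [sub_ne_zero.2 hab.symm]
  ring

theorem Polynomial.eval_iterate_derivative_comp_toSymmetricInterval (j : ℕ) (x : ℝ) :
    (derivative^[j] (Q.comp (toSymmetricInterval a b))).eval x =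
      (2 / (b - a)) ^ j * (derivative^[j] Q).eval ((toSymmetricInterval a b).eval x) := by
  rw [toSymmetricInterval, iterate_derivative_comp_C_mul_X_add_C, eval_mul, eval_C, eval_comp]

theorem Polynomial.eval_iterate_derivative_comp_toSymmetricInterval_left (hab : a ≠ b)
    (hQvan : ∀ k < ℓ, (derivative^[k] Q).eval (-1) = 0) {j : ℕ} (hj : j < ℓ) :
    (derivative^[j] (Q.comp (toSymmetricInterval a b))).eval a = 0 := by
  rw [eval_iterate_derivative_comp_toSymmetricInterval, eval_toSymmetricInterval_left hab,
    hQvan j hj, mul_zero]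

theorem Polynomial.eval_iterate_derivative_comp_toSymmetricInterval_right (hab : a ≠ b)
    (hQsym : ∀ t : ℝ, Q.eval t + Q.eval (-t) = 1)
    (hQvan : ∀ k < ℓ, (derivative^[k] Q).eval (-1) = 0) {j : ℕ} (hj₀ : 0 < j) (hj : j < ℓ) :
    (derivative^[j] (Q.comp (toSymmetricInterval a b))).eval b = 0 := by
  have hsymm := iterate_derivative_eval_neg_of_eval_add_eval_neg hQsym hj₀ 1
  rw [hQvan j hj, mul_zero, zero_eq_neg] at hsymm
  rw [eval_iterate_derivative_comp_toSymmetricInterval, eval_toSymmetricInterval_right hab,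
    hsymm, mul_zero]

theorem Polynomial.eval_comp_toSymmetricInterval_right (hab : a ≠ b)
    (hQsym : ∀ t : ℝ, Q.eval t + Q.eval (-t) = 1) (hQ : Q.eval (-1) = 0) :
    (Q.comp (toSymmetricInterval a b)).eval b = 1 := by
  rw [eval_comp, eval_toSymmetricInterval_right hab]
  linarith [hQsym 1]

end GreenPolynomial

/-- `ψ k` is the absolutely continuous representative of the `k`-th weak derivative. -/
theorem stmt7 (ℓ : ℕ) (hℓ : 1 ≤ ℓ) (a b : ℝ) (hab : a < b)
    (ψ : ℕ → ℝ → ℝ)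
    (hint : ∀ k ≤ 2*ℓ, IntegrableOn (ψ k) (Icc a b) volume)
    (hderiv : ∀ k < 2*ℓ, ∀ t ∈ Icc a b, ψ k t = ψ k a + ∫ s in a..t, ψ (k+1) s)
    (hbry : ∀ k < ℓ, ψ k a = 0 ∧ ψ k b = 0)
    (Q : Polynomial ℝ) (hQdeg : Q.natDegree = 2*ℓ-1)
    (hQsym : ∀ t : ℝ, Q.eval t + Q.eval (-t) = 1)
    (hQvan : ∀ k < ℓ, (derivative^[k] Q).eval (-1) = 0) :
    ∀ᵐ t ∂(volume.restrict (Ioo a b)),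
      ψ (2*ℓ-1) t =
        (∫ τ in a..t, Q.eval ((2*τ - a - b)/(b - a)) * ψ (2*ℓ) τ)
          - ∫ τ in t..b, Q.eval ((a + b - 2*τ)/(b - a)) * ψ (2*ℓ) τ := by
  rw [← uIcc_of_le hab.le] at hint hderiv
  have hdeg : (Q.comp (toSymmetricInterval a b)).natDegree < 2 * ℓ := by
    have hL : (toSymmetricInterval a b).natDegree ≤ 1 := by
      unfold toSymmetricInterval; compute_degree
    have := natDegree_comp_le.trans (Nat.mul_le_mul_left Q.natDegree hL)
    omega
  have hQneg : Q.eval (-1) = 0 := by simpa using hQvan 0 hℓ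
  have hreflect (τ : ℝ) :
      Q.eval ((a + b - 2 * τ) / (b - a)) = 1 - Q.eval ((2 * τ - a - b) / (b - a)) := by
    rw [show (a + b - 2 * τ) / (b - a) = -((2 * τ - a - b) / (b - a)) by ring]
    linarith [hQsym ((2 * τ - a - b) / (b - a))]
  refine ae_restrict_of_forall_mem measurableSet_Ioo fun t ht => ?_
  rw [eq_integral_sub_integral_of_hermite hdeg
    (fun j => eval_iterate_derivative_comp_toSymmetricInterval_left hab.ne hQvan)
    (eval_comp_toSymmetricInterval_right hab.ne hQsym hQneg)
    (fun j => eval_iterate_derivative_comp_toSymmetricInterval_right hab.ne hQsym hQvan)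
    (fun k hk => (hint (k + 1) hk).intervalIntegrable) hderiv hbry
    (uIcc_of_le hab.le ▸ Ioo_subset_Icc_self ht)]
  congr 1 <;> refine integral_congr fun τ _ => ?_ <;>
    simp only [eval_comp, eval_toSymmetricInterval, hreflect]
end

section
/- Let Ω ⊆ ℝⁿ be open, γ ∈ (0,n), and μ a Borel measure on Ω satisfying μ(B_r(x) ∩ Ω) ≤ C_μ r^α for all x ∈ Ω, r > 0, with α ∈ (n−γ, n]. Define N_γ g(x) = ∫_{∂Ω} g(y)/|x−y|^{n−γ} dH^{n−1}(y). Then there is a constant C = C(n,α,γ,C_μ) such that sup_{t>0} t · μ({x ∈ Ω : |N_γ g(x)| > t})^{(n−γ)/α} ≤ C ∫_{∂Ω} |g| dH^{n−1} for every g ∈ L¹(∂Ω, H^{n−1}). -/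
open Set MeasureTheory
open scoped ENNReal NNReal

/-!
Write `β = n - γ` and `a = α`. For `S ⊆ Ω` and `y ∉ Ω` choose `r` with `C r ^ a = μ S`. Bounding
`|x - y| ^ (-β)` by `r ^ (-β)` off `B(y, r)`, and summing over the dyadic annuli of `B(y, r)`,
whose measure the regularity of `μ` controls, gives `∫_S |x - y| ^ (-β) dμ(x) ≲ μ(S) ^ (1 - β / a)`.
By Tonelli, Chebyshev's inequality on a finite-measure piece `S` of the superlevel set
`{N g > t}` then yields `t μ(S) ≲ ‖g‖₁ μ(S) ^ (1 - β / a)`, that is `t μ(S) ^ (β / a) ≲ ‖g‖₁`,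
and the superlevel set is exhausted by its intersections with balls.

`g` need not be measurable and the Hausdorff measure on `∂Ω` need not be σ-finite. A measurable
minorant `h` of `‖g‖` with the same integral has the same integral against every measurable weight
that is finite almost everywhere, so `‖g‖ dH^{n-1}` may be replaced by the finite measure
`h dH^{n-1}`.
-/

section LIntegral

variable {α : Type*} [MeasurableSpace α] {ν : Measure α}

theorem lintegral_mul_eq_of_le_of_lintegral_eq {f h φ : α → ℝ≥0∞} (hh : Measurable h)
    (hhf : h ≤ f) (hfh : ∫⁻ y, f y ∂ν = ∫⁻ y, h y ∂ν) (hfin : ∫⁻ y, h y ∂ν ≠ ∞)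
    (hφ : Measurable φ) (hφfin : ∀ᵐ y ∂ν, φ y ≠ ∞) :
    ∫⁻ y, f y * φ y ∂ν = ∫⁻ y, h y * φ y ∂ν := by
  refine le_antisymm ?_ (lintegral_mono fun y => mul_le_mul_left (hhf y) _)
  obtain ⟨u, hu, huf, hu_eq⟩ := exists_measurable_le_lintegral_eq ν fun y => f y * φ y
  have hmax : h =ᵐ[ν] fun y => max (h y) (u y / φ y) :=
    ae_eq_of_ae_le_of_lintegral_le (ae_of_all _ fun y => le_max_left _ _) hfin
      (hh.max (hu.div hφ)).aemeasurable
      ((lintegral_mono fun y => max_le (hhf y) (ENNReal.div_le_of_le_mul (huf y))).trans hfh.le)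
  rw [hu_eq]
  refine lintegral_mono_ae ?_
  filter_upwards [hmax, hφfin] with y hy hφy
  rcases eq_or_ne (φ y) 0 with h0 | h0
  · simpa [h0] using huf y
  calc u y = u y / φ y * φ y := (ENNReal.div_mul_cancel h0 hφy).symm
    _ ≤ h y * φ y := by
        gcongr
        rw [hy]
        exact le_max_right _ _

theorem exists_isFiniteMeasure_lintegral_mul_eq {f : α → ℝ≥0∞} (hf : ∫⁻ y, f y ∂ν ≠ ∞) :
    ∃ ρ : Measure α, IsFiniteMeasure ρ ∧ ρ ≪ ν ∧ ρ univ = ∫⁻ y, f y ∂ν ∧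
      ∀ φ : α → ℝ≥0∞, Measurable φ → (∀ᵐ y ∂ν, φ y ≠ ∞) →
        ∫⁻ y, f y * φ y ∂ν = ∫⁻ y, φ y ∂ρ := by
  obtain ⟨h, hh, hhf, hfh⟩ := exists_measurable_le_lintegral_eq ν f
  refine ⟨ν.withDensity h, isFiniteMeasure_withDensity (hfh ▸ hf),
    withDensity_absolutelyContinuous _ _,
    by rw [withDensity_apply _ .univ, Measure.restrict_univ, hfh], fun φ hφ hφfin => ?_⟩
  rw [lintegral_withDensity_eq_lintegral_mul _ hh hφ]
  exact lintegral_mul_eq_of_le_of_lintegral_eq hh hhf hfh (hfh ▸ hf) hφ hφfin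

theorem ENNReal.mul_rpow_le_of_mul_le_mul_rpow {T m c : ℝ≥0∞} {θ : ℝ} (hθ : 0 < θ)
    (hm : m ≠ ∞) (h : T * m ≤ c * m ^ (1 - θ)) : T * m ^ θ ≤ c := by
  rcases eq_or_ne m 0 with rfl | h0
  · simp [ENNReal.zero_rpow_of_pos hθ]
  refine (ENNReal.mul_le_mul_iff_left (c := m ^ (1 - θ))
    (ENNReal.rpow_pos (pos_iff_ne_zero.2 h0) hm).ne' (ENNReal.rpow_ne_top_of_ne_zero h0 hm)).1 ?_
  rwa [mul_assoc, ← ENNReal.rpow_add _ _ h0 hm, add_sub_cancel, ENNReal.rpow_one]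

theorem mul_measure_le_of_lt_lintegral {β : Type*} [MeasurableSpace β] {μ : Measure α}
    {ρ : Measure β} [SFinite ρ] {k : α → β → ℝ≥0∞} (hk : Measurable (Function.uncurry k))
    {S : Set α} (hSfin : μ S ≠ ∞) {T B : ℝ≥0∞}
    (hT : ∀ x ∈ S, T < ∫⁻ y, k x y ∂ρ) (hB : ∀ᵐ y ∂ρ, ∫⁻ x in S, k x y ∂μ ≤ B) :
    T * μ S ≤ B * ρ univ := by
  have : IsFiniteMeasure (μ.restrict S) := isFiniteMeasure_restrict.2 hSfin
  calc T * μ S = ∫⁻ _ in S, T ∂μ := (setLIntegral_const _ _).symm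
    _ ≤ ∫⁻ x in S, ∫⁻ y, k x y ∂ρ ∂μ :=
        setLIntegral_mono hk.lintegral_prod_right' fun x hx => (hT x hx).le
    _ = ∫⁻ y, ∫⁻ x in S, k x y ∂μ ∂ρ := lintegral_lintegral_swap hk.aemeasurable
    _ ≤ ∫⁻ _, B ∂ρ := lintegral_mono_ae hB
    _ = B * ρ univ := lintegral_const _

end LIntegral

section Potential

variable {X : Type*} [MetricSpace X]

theorem edist_rpow_neg_le_ofReal {x y : X} {r β : ℝ} (hβ : 0 ≤ β) (hr : 0 < r)
    (h : r ≤ dist x y) : edist x y ^ (-β) ≤ ENNReal.ofReal (r ^ (-β)) := by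
  rw [edist_dist, ENNReal.ofReal_rpow_of_pos (hr.trans_le h)]
  exact ENNReal.ofReal_le_ofReal (Real.rpow_le_rpow_of_nonpos hr h (neg_nonpos.2 hβ))

def dyadicAnnulus (y : X) (r : ℝ) (j : ℕ) : Set X :=
  Metric.closedBall y (r / 2 ^ j) \ Metric.closedBall y (r / 2 ^ (j + 1))

theorem mem_dyadicAnnulus {x y : X} {r : ℝ} {j : ℕ} :
    x ∈ dyadicAnnulus y r j ↔ r / 2 ^ (j + 1) < dist x y ∧ dist x y ≤ r / 2 ^ j := by
  rw [dyadicAnnulus, mem_sdiff, Metric.mem_closedBall, Metric.mem_closedBall, not_le, and_comm]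

theorem closedBall_sdiff_singleton_subset_iUnion_dyadicAnnulus (y : X) (r : ℝ) :
    Metric.closedBall y r \ {y} ⊆ ⋃ j, dyadicAnnulus y r j := by
  rintro x ⟨hxr, hxy⟩
  rw [Metric.mem_closedBall] at hxr
  have hd : 0 < dist x y := dist_pos.2 hxy
  obtain ⟨j, hj, hj'⟩ := exists_nat_pow_near ((one_le_div hd).2 hxr) one_lt_two
  refine mem_iUnion.2 ⟨j, mem_dyadicAnnulus.2 ⟨?_, ?_⟩⟩
  · rw [div_lt_iff₀ (by positivity), mul_comm]
    exact (div_lt_iff₀ hd).1 hj'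
  · rw [le_div_iff₀ (by positivity), mul_comm]
    exact (le_div_iff₀ hd).1 hj

variable [MeasurableSpace X]

theorem setLIntegral_sdiff_closedBall_edist_rpow_neg_le {μ : Measure X} {S : Set X}
    {y : X} {r β : ℝ} (hβ : 0 ≤ β) (hr : 0 < r) :
    ∫⁻ x in S \ Metric.closedBall y r, edist x y ^ (-β) ∂μ ≤ ENNReal.ofReal (r ^ (-β)) * μ S :=
  calc ∫⁻ x in S \ Metric.closedBall y r, edist x y ^ (-β) ∂μ
      ≤ ∫⁻ _ in S \ Metric.closedBall y r, ENNReal.ofReal (r ^ (-β)) ∂μ :=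
        setLIntegral_mono measurable_const fun x hx =>
          edist_rpow_neg_le_ofReal hβ hr (not_le.1 hx.2).le
    _ ≤ ENNReal.ofReal (r ^ (-β)) * μ S := by
        rw [setLIntegral_const]
        gcongr
        exact sdiff_subset

def UpperAhlforsRegularOn (μ : Measure X) (Ω : Set X) (C a : ℝ) : Prop :=
  ∀ x ∈ Ω, ∀ r : ℝ, 0 < r → μ (Metric.ball x r ∩ Ω) ≤ ENNReal.ofReal (C * r ^ a)

namespace UpperAhlforsRegularOn

variable {μ : Measure X} {Ω S : Set X} {C a β : ℝ}

theorem measure_le_of_subset_closedBall (hμ : UpperAhlforsRegularOn μ Ω C a) (hSΩ : S ⊆ Ω)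
    {y : X} {r : ℝ} (hr : 0 < r) (hS : S ⊆ Metric.closedBall y r) :
    μ S ≤ ENNReal.ofReal (C * (3 * r) ^ a) := by
  rcases S.eq_empty_or_nonempty with rfl | ⟨x₀, hx₀⟩
  · simp
  have hsub : S ⊆ Metric.ball x₀ (3 * r) ∩ Ω := fun x hx => by
    have hxy := Metric.mem_closedBall.1 (hS hx)
    have hx₀y := Metric.mem_closedBall.1 (hS hx₀)
    exact ⟨Metric.mem_ball.2 (by linarith [dist_triangle_right x x₀ y]), hSΩ hx⟩
  exact (measure_mono hsub).trans (hμ x₀ (hSΩ hx₀) _ (by positivity))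

theorem setLIntegral_inter_dyadicAnnulus_le (hμ : UpperAhlforsRegularOn μ Ω C a) (hβ : 0 ≤ β)
    (hSΩ : S ⊆ Ω) {y : X} {r : ℝ} (hr : 0 < r) (j : ℕ) :
    ∫⁻ x in S ∩ dyadicAnnulus y r j, edist x y ^ (-β) ∂μ ≤
      ENNReal.ofReal (C * 3 ^ a * 2 ^ β * r ^ (a - β) * ((2:ℝ) ^ (β - a)) ^ j) := by
  have hr' : 0 < r / 2 ^ (j + 1) := by positivity
  have h2 : (0:ℝ) < 2 ^ j := by positivity
  calc ∫⁻ x in S ∩ dyadicAnnulus y r j, edist x y ^ (-β) ∂μ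
      ≤ ∫⁻ _ in S ∩ dyadicAnnulus y r j, ENNReal.ofReal ((r / 2 ^ (j + 1)) ^ (-β)) ∂μ :=
        setLIntegral_mono measurable_const fun x hx =>
          edist_rpow_neg_le_ofReal hβ hr' (mem_dyadicAnnulus.1 hx.2).1.le
    _ = ENNReal.ofReal ((r / 2 ^ (j + 1)) ^ (-β)) * μ (S ∩ dyadicAnnulus y r j) :=
        setLIntegral_const _ _
    _ ≤ ENNReal.ofReal ((r / 2 ^ (j + 1)) ^ (-β)) *
          ENNReal.ofReal (C * (3 * (r / 2 ^ j)) ^ a) := by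
        gcongr
        exact hμ.measure_le_of_subset_closedBall (inter_subset_left.trans hSΩ) (by positivity)
          fun x hx => Metric.mem_closedBall.2 (mem_dyadicAnnulus.1 hx.2).2
    _ = _ := by
        rw [← ENNReal.ofReal_mul (by positivity)]
        congr 1
        rw [← Real.rpow_natCast ((2:ℝ) ^ (β - a)) j, ← Real.rpow_mul zero_le_two,
          mul_comm (β - a), Real.rpow_mul zero_le_two, Real.rpow_natCast, pow_succ,
          Real.div_rpow hr.le (by positivity), Real.mul_rpow h2.le zero_le_two,
          Real.mul_rpow zero_le_three (by positivity), Real.div_rpow hr.le h2.le,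
          Real.rpow_sub hr, Real.rpow_sub h2, Real.rpow_neg hr.le, Real.rpow_neg h2.le,
          Real.rpow_neg zero_le_two]
        field_simp

theorem setLIntegral_inter_closedBall_edist_rpow_neg_le (hμ : UpperAhlforsRegularOn μ Ω C a)
    (hC : 0 ≤ C) (hβ : 0 < β) (hβa : β < a) (hSΩ : S ⊆ Ω) {y : X} (hy : y ∉ S) {r : ℝ}
    (hr : 0 < r) :
    ∫⁻ x in S ∩ Metric.closedBall y r, edist x y ^ (-β) ∂μ ≤
      ENNReal.ofReal (C * 3 ^ a * 2 ^ β / (1 - 2 ^ (β - a)) * r ^ (a - β)) := by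
  set q : ℝ := 2 ^ (β - a)
  have hq0 : 0 ≤ q := by positivity
  have hq1 : q < 1 := Real.rpow_lt_one_of_one_lt_of_neg one_lt_two (by linarith)
  set c : ℝ := C * 3 ^ a * 2 ^ β * r ^ (a - β)
  have hcover : S ∩ Metric.closedBall y r ⊆ ⋃ j, S ∩ dyadicAnnulus y r j := fun x hx => by
    rw [← inter_iUnion]
    exact ⟨hx.1, closedBall_sdiff_singleton_subset_iUnion_dyadicAnnulus y r
      ⟨hx.2, ne_of_mem_of_not_mem hx.1 hy⟩⟩
  calc ∫⁻ x in S ∩ Metric.closedBall y r, edist x y ^ (-β) ∂μ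
      ≤ ∑' j, ∫⁻ x in S ∩ dyadicAnnulus y r j, edist x y ^ (-β) ∂μ :=
        (lintegral_mono_set hcover).trans (lintegral_iUnion_le _ _)
    _ ≤ ∑' j, ENNReal.ofReal (c * q ^ j) :=
        ENNReal.tsum_le_tsum (hμ.setLIntegral_inter_dyadicAnnulus_le hβ.le hSΩ hr)
    _ = ENNReal.ofReal (c * (1 - q)⁻¹) := by
        rw [← ENNReal.ofReal_tsum_of_nonneg (fun j => by positivity)
          ((summable_geometric_of_lt_one hq0 hq1).mul_left c), tsum_mul_left,
          tsum_geometric_of_lt_one hq0 hq1]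
    _ = _ := by
        congr 1
        ring

variable [BorelSpace X]

theorem exists_setLIntegral_edist_rpow_neg_le (hμ : UpperAhlforsRegularOn μ Ω C a) (hC : 0 < C)
    (hβ : 0 < β) (hβa : β < a) :
    ∃ K : ℝ, 0 < K ∧ ∀ S ⊆ Ω, ∀ y ∉ S,
      ∫⁻ x in S, edist x y ^ (-β) ∂μ ≤ ENNReal.ofReal K * μ S ^ (1 - β / a) := by
  have ha : 0 < a := hβ.trans hβa
  have hθ1 : 0 < 1 - β / a := sub_pos.2 ((div_lt_one ha).2 hβa)
  set K₁ : ℝ := C * 3 ^ a * 2 ^ β / (1 - 2 ^ (β - a))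
  have hK₁ : 0 ≤ K₁ :=
    div_nonneg (by positivity)
      (sub_nonneg.2 (Real.rpow_le_one_of_one_le_of_nonpos one_le_two (by linarith)))
  refine ⟨(K₁ + C) / C ^ (1 - β / a), by positivity, fun S hSΩ y hy => ?_⟩
  rcases eq_or_ne (μ S) ∞ with hS | hS
  · rw [hS, ENNReal.top_rpow_of_pos hθ1, ENNReal.mul_top (by simp; positivity)]
    exact le_top
  rcases eq_or_ne (μ S) 0 with h0 | h0
  · simp [Measure.restrict_eq_zero.2 h0]
  obtain ⟨m, hm, hSm⟩ : ∃ m : ℝ, 0 < m ∧ μ S = ENNReal.ofReal m :=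
    ⟨(μ S).toReal, ENNReal.toReal_pos h0 hS, (ENNReal.ofReal_toReal hS).symm⟩
  set r := (m / C) ^ a⁻¹
  have hr : 0 < r := by positivity
  have hra : m = C * r ^ a := by
    rw [← Real.rpow_mul (by positivity), inv_mul_cancel₀ ha.ne', Real.rpow_one,
      mul_div_cancel₀ _ hC.ne']
  have hbalance : K₁ * r ^ (a - β) + r ^ (-β) * m =
      (K₁ + C) / C ^ (1 - β / a) * m ^ (1 - β / a) := by
    rw [hra, Real.mul_rpow hC.le (by positivity), ← Real.rpow_mul hr.le, mul_sub, mul_one,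
      mul_div_cancel₀ _ ha.ne', Real.rpow_sub hr, Real.rpow_neg hr.le]
    field_simp
  calc ∫⁻ x in S, edist x y ^ (-β) ∂μ
      = ∫⁻ x in S ∩ Metric.closedBall y r, edist x y ^ (-β) ∂μ +
          ∫⁻ x in S \ Metric.closedBall y r, edist x y ^ (-β) ∂μ :=
        (lintegral_inter_add_sdiff _ _ Metric.isClosed_closedBall.measurableSet).symm
    _ ≤ ENNReal.ofReal (K₁ * r ^ (a - β)) + ENNReal.ofReal (r ^ (-β)) * μ S :=
        add_le_add (hμ.setLIntegral_inter_closedBall_edist_rpow_neg_le hC.le hβ hβa hSΩ hy hr)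
          (setLIntegral_sdiff_closedBall_edist_rpow_neg_le hβ.le hr)
    _ = ENNReal.ofReal ((K₁ + C) / C ^ (1 - β / a)) * μ S ^ (1 - β / a) := by
        rw [hSm, ENNReal.ofReal_rpow_of_pos hm, ← ENNReal.ofReal_mul (by positivity),
          ← ENNReal.ofReal_mul (by positivity), ← ENNReal.ofReal_add (by positivity)
          (by positivity), hbalance]

variable [SecondCountableTopology X]

theorem exists_mul_measure_superlevel_rpow_le (hμ : UpperAhlforsRegularOn μ Ω C a)
    (hC : 0 < C) (hβ : 0 < β) (hβa : β < a) :
    ∃ K : ℝ, 0 < K ∧ ∀ (ρ : Measure X) [SFinite ρ], (∀ᵐ y ∂ρ, y ∉ Ω) → ∀ T : ℝ≥0∞,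
      T * μ {x | x ∈ Ω ∧ T < ∫⁻ y, edist x y ^ (-β) ∂ρ} ^ (β / a) ≤
        ENNReal.ofReal K * ρ univ := by
  obtain ⟨K, hK, hpot⟩ := hμ.exists_setLIntegral_edist_rpow_neg_le hC hβ hβa
  refine ⟨K, hK, fun ρ _ hρΩ T => ?_⟩
  have hθ : 0 < β / a := div_pos hβ (hβ.trans hβa)
  have hk : Measurable fun p : X × X => edist p.1 p.2 ^ (-β) := measurable_edist.pow_const _
  set E := {x | x ∈ Ω ∧ T < ∫⁻ y, edist x y ^ (-β) ∂ρ}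
  have hpiece : ∀ S ⊆ E, μ S ≠ ∞ → T * μ S ^ (β / a) ≤ ENNReal.ofReal K * ρ univ := by
    intro S hSE hSfin
    refine ENNReal.mul_rpow_le_of_mul_le_mul_rpow hθ hSfin ?_
    rw [mul_right_comm]
    exact mul_measure_le_of_lt_lintegral hk hSfin (fun x hx => (hSE hx).2)
      (hρΩ.mono fun y hy => hpot S (fun x hx => (hSE hx).1) y fun hyS => hy (hSE hyS).1)
  rcases E.eq_empty_or_nonempty with hE0 | ⟨x₀, -⟩
  · simp [E, hE0, ENNReal.zero_rpow_of_pos hθ]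
  have hmono : Monotone fun k : ℕ => E ∩ Metric.ball x₀ (k + 1) := fun i j hij =>
    inter_subset_inter_right _ (Metric.ball_subset_ball (by gcongr))
  have hsup : μ E ^ (β / a) = ⨆ k : ℕ, μ (E ∩ Metric.ball x₀ (k + 1)) ^ (β / a) := by
    conv_lhs => rw [← inter_univ E, ← Metric.iUnion_ball_nat_succ x₀, inter_iUnion,
      hmono.measure_iUnion]
    exact (ENNReal.orderIsoRpow _ hθ).map_iSup _
  rw [hsup, ENNReal.mul_iSup]
  refine iSup_le fun k => hpiece _ inter_subset_left ?_
  exact ne_top_of_le_ne_top ENNReal.ofReal_ne_top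
    (hμ.measure_le_of_subset_closedBall (fun x hx => hx.1.1) (r := k + 1) (by positivity)
      (inter_subset_right.trans Metric.ball_subset_closedBall))

end UpperAhlforsRegularOn

end Potential

theorem stmt10_general {n : ℕ} (Ω : Set (EuclideanSpace ℝ (Fin n))) (hΩ : IsOpen Ω)
    (γ : ℝ) (hγn : γ < n)
    (α : ℝ) (hα1 : (n:ℝ) - γ < α)
    (μ : Measure (EuclideanSpace ℝ (Fin n))) (Cμ : ℝ) (hCμ : 0 < Cμ)
    (hμ : ∀ x ∈ Ω, ∀ r : ℝ, 0 < r → μ (Metric.ball x r ∩ Ω) ≤ ENNReal.ofReal (Cμ * r ^ α)) :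
    ∃ C : ℝ, 0 < C ∧ ∀ g : EuclideanSpace ℝ (Fin n) → ℝ,
      (∫⁻ y in frontier Ω, (‖g y‖₊ : ℝ≥0∞) ∂μH[(n:ℝ) - 1]) < ⊤ →
      ∀ t : ℝ, 0 < t →
        ENNReal.ofReal t *
          (μ {x | x ∈ Ω ∧ ENNReal.ofReal t <
              ∫⁻ y in frontier Ω,
                (‖g y‖₊ : ℝ≥0∞) * edist x y ^ (-((n:ℝ) - γ)) ∂μH[(n:ℝ) - 1]})
            ^ (((n:ℝ) - γ)/α)
        ≤ ENNReal.ofReal C * ∫⁻ y in frontier Ω, (‖g y‖₊ : ℝ≥0∞) ∂μH[(n:ℝ) - 1] := by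
  obtain ⟨K, hK, hweak⟩ := UpperAhlforsRegularOn.exists_mul_measure_superlevel_rpow_le hμ hCμ
    (sub_pos.2 hγn) hα1
  refine ⟨K, hK, fun g hg t _ => ?_⟩
  obtain ⟨ρ, _, hρν, hρuniv, hρ⟩ := exists_isFiniteMeasure_lintegral_mul_eq hg.ne
  have hfrontier : ∀ᵐ y ∂(μH[(n:ℝ) - 1].restrict (frontier Ω)), y ∉ Ω :=
    ae_restrict_of_forall_mem isClosed_frontier.measurableSet fun y hy =>
      disjoint_frontier_iff_isOpen.2 hΩ |>.notMem_of_mem_left hy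
  have hN : ∀ x ∈ Ω, ∫⁻ y in frontier Ω, (‖g y‖₊ : ℝ≥0∞) * edist x y ^ (-((n:ℝ) - γ))
      ∂μH[(n:ℝ) - 1] = ∫⁻ y, edist x y ^ (-((n:ℝ) - γ)) ∂ρ := fun x hx =>
    hρ _ (by fun_prop) (hfrontier.mono fun y hy =>
      ENNReal.rpow_ne_top_of_ne_zero (edist_pos.2 (ne_of_mem_of_not_mem hx hy)).ne'
        (edist_ne_top x y))
  rw [← hρuniv]
  convert hweak ρ (hρν.ae_le hfrontier) (ENNReal.ofReal t) using 4
  exact sep_ext_iff.2 fun x hx => by rw [hN x hx]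

/-- Weak-type estimate for the boundary potential
N_γ g(x) = ∫_{∂Ω} g(y)|x−y|^{γ−n} dH^{n−1}(y) with respect to a measure μ
satisfying μ(B_r ∩ Ω) ≤ C_μ r^α, α ∈ (n−γ, n]:
t · μ({N_γ|g| > t})^{(n−γ)/α} ≤ C ‖g‖_{L¹(∂Ω)}. -/
theorem stmt10 {n : ℕ} (hn : 2 ≤ n) (Ω : Set (EuclideanSpace ℝ (Fin n))) (hΩ : IsOpen Ω)
    (γ : ℝ) (hγ0 : 0 < γ) (hγn : γ < n)
    (α : ℝ) (hα1 : (n:ℝ) - γ < α) (hα2 : α ≤ n)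
    (μ : Measure (EuclideanSpace ℝ (Fin n))) (Cμ : ℝ) (hCμ : 0 < Cμ)
    (hμ : ∀ x ∈ Ω, ∀ r : ℝ, 0 < r → μ (Metric.ball x r ∩ Ω) ≤ ENNReal.ofReal (Cμ * r ^ α)) :
    ∃ C : ℝ, 0 < C ∧ ∀ g : EuclideanSpace ℝ (Fin n) → ℝ,
      (∫⁻ y in frontier Ω, (‖g y‖₊ : ℝ≥0∞) ∂μH[(n:ℝ) - 1]) < ⊤ →
      ∀ t : ℝ, 0 < t →
        ENNReal.ofReal t *
          (μ {x | x ∈ Ω ∧ ENNReal.ofReal t <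
              ∫⁻ y in frontier Ω,
                (‖g y‖₊ : ℝ≥0∞) * edist x y ^ (-((n:ℝ) - γ)) ∂μH[(n:ℝ) - 1]})
            ^ (((n:ℝ) - γ)/α)
        ≤ ENNReal.ofReal C * ∫⁻ y in frontier Ω, (‖g y‖₊ : ℝ≥0∞) ∂μH[(n:ℝ) - 1] :=
  stmt10_general Ω hΩ γ hγn α hα1 μ Cμ hCμ hμ
end

section
/- Let Ω ⊆ ℝⁿ be open, n ≥ 2. For a Borel function g : ∂Ω → ℝ define Tg(x) = ∫_{S^{n−1}} |g(ζ(x,θ))| dH^{n−1}(θ), where ζ(x,θ) is the first intersection of the ray from x in direction θ with ∂Ω (with the convention g(ζ(x,θ)) = 0 if the ray never meets ∂Ω). Then Tg(x) ≤ 2ⁿ ∫_{∂Ω} |g(y)|/|x−y|^{n−1} dH^{n−1}(y) for a.e. x ∈ Ω. -/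
open Set MeasureTheory
open scoped ENNReal NNReal RealInnerProductSpace

/-!
The radial projection `Π y = (y - x)/|y - x|` is `1/r`-Lipschitz on `{|y - x| ≥ r}`, so on a
dyadic annulus `r ≤ |y - x| ≤ 2r` it satisfies
`H^d(Π E) ≤ r^{-d} H^d(E) ≤ 2^d ∫_E |x - y|^{-d} dH^d`; summing over annuli gives the same bound
for every Borel `E ∌ x`. A direction `θ` at which the integrand of `Tg(x)` exceeds `t` is the
projection of a boundary point where `|g| > t`, so the bound applied to `E = ∂Ω ∩ {|g| > t}`
controls every level set of the integrand, and the layer-cake formula integrates this over `t`.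
-/

lemma lintegral_ofReal_le_of_meas_lt_le {α β : Type*} [MeasurableSpace α] [MeasurableSpace β]
    {ν : Measure α} {ρ : Measure β} {u : α → ℝ} {v : β → ℝ} (hv : 0 ≤ v) (hvm : Measurable v)
    (huv : ∀ t > 0, ν {a | t < u a} ≤ ρ {b | t < v b}) :
    ∫⁻ a, ENNReal.ofReal (u a) ∂ν ≤ ∫⁻ b, ENNReal.ofReal (v b) ∂ρ := by
  -- `u` need not be measurable: pass to a measurable minorant with the same integral
  obtain ⟨w, hwm, hwu, hint⟩ := exists_measurable_le_lintegral_eq ν fun a => ENNReal.ofReal (u a)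
  have hw_ne_top : ∀ a, w a ≠ ∞ := fun a => ne_top_of_le_ne_top ENNReal.ofReal_ne_top (hwu a)
  have hlevel : ∀ t > 0, {a | t < (w a).toReal} ⊆ {a | t < u a} := fun t ht a ha => by
    have := ha.trans_le (ENNReal.toReal_mono ENNReal.ofReal_ne_top (hwu a))
    rw [ENNReal.toReal_ofReal'] at this
    exact (lt_max_iff.1 this).resolve_right ht.not_gt
  calc ∫⁻ a, ENNReal.ofReal (u a) ∂ν = ∫⁻ a, ENNReal.ofReal (w a).toReal ∂ν := by
        simp only [hint, ENNReal.ofReal_toReal (hw_ne_top _)]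
    _ = ∫⁻ t in Ioi 0, ν {a | t < (w a).toReal} :=
        lintegral_eq_lintegral_meas_lt ν (ae_of_all _ fun _ => ENNReal.toReal_nonneg)
          hwm.ennreal_toReal.aemeasurable
    _ ≤ ∫⁻ t in Ioi 0, ρ {b | t < v b} :=
        setLIntegral_mono' measurableSet_Ioi fun t ht =>
          (measure_mono (hlevel t ht)).trans (huv t ht)
    _ = ∫⁻ b, ENNReal.ofReal (v b) ∂ρ :=
        (lintegral_eq_lintegral_meas_lt ρ (ae_of_all _ hv) hvm.aemeasurable).symm

section RadialProjection

variable {E : Type*} [NormedAddCommGroup E] [InnerProductSpace ℝ E]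

lemma lipschitzOnWith_normalize {r : ℝ≥0} (hr : 0 < r) :
    LipschitzOnWith r⁻¹ (NormedSpace.normalize : E → E) {u | r ≤ ‖u‖₊} := by
  refine LipschitzOnWith.of_dist_le_mul fun u hu v hv => ?_
  simp only [mem_ofPred_eq, ← NNReal.coe_le_coe, coe_nnnorm] at hu hv
  have hr' : (0 : ℝ) < r := hr
  have ha : 0 < ‖u‖ := hr'.trans_le hu
  have hb : 0 < ‖v‖ := hr'.trans_le hv
  rw [dist_eq_norm, dist_eq_norm, NNReal.coe_inv, ← div_eq_inv_mul, le_div_iff₀ hr']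
  have hc : ⟪u, v⟫ ≤ ‖u‖ * ‖v‖ := real_inner_le_norm u v
  -- squared and cleared of denominators, this is
  -- `r² (2‖u‖‖v‖ - 2⟪u,v⟫) ≤ ‖u‖‖v‖ (‖u‖² + ‖v‖² - 2⟪u,v⟫)`, which follows from
  -- `r² ≤ ‖u‖‖v‖` and `2‖u‖‖v‖ ≤ ‖u‖² + ‖v‖²`
  have hsq : (‖NormedSpace.normalize u - NormedSpace.normalize v‖ * r) ^ 2 * (‖u‖ * ‖v‖)
      ≤ ‖u - v‖ ^ 2 * (‖u‖ * ‖v‖) := by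
    rw [mul_pow, norm_sub_sq_real, norm_sub_sq_real, NormedSpace.normalize, NormedSpace.normalize,
      real_inner_smul_left, real_inner_smul_right, norm_smul, norm_smul, norm_inv, norm_norm,
      norm_inv, norm_norm]
    field_simp
    nlinarith [mul_le_mul_of_nonneg_right (mul_le_mul hu hv hr'.le ha.le) (sub_nonneg.2 hc),
      sq_nonneg (‖u‖ - ‖v‖), mul_pos ha hb]
  exact (pow_le_pow_iff_left₀ (by positivity) (norm_nonneg _) two_ne_zero).1
    (le_of_mul_le_mul_right hsq (mul_pos ha hb))

variable [MeasurableSpace E] [BorelSpace E]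

lemma hausdorffMeasure_image_normalize_sub_le_of_subset_annulus {d : ℝ} (hd : 0 ≤ d) (x : E)
    {r : ℝ≥0} (hr : 0 < r) {s : Set E} (hs : MeasurableSet s)
    (hsr : ∀ y ∈ s, r ≤ nndist y x ∧ nndist y x ≤ 2 * r) :
    μH[d] ((fun y => NormedSpace.normalize (y - x)) '' s)
      ≤ 2 ^ d * ∫⁻ y in s, edist x y ^ (-d) ∂μH[d] := by
  have hlip : LipschitzOnWith (r⁻¹ * 1) (fun y => NormedSpace.normalize (y - x)) s :=
    (lipschitzOnWith_normalize hr).comp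
      (IsometryEquiv.subRight x).isometry.lipschitz.lipschitzOnWith
      fun y hy => (hsr y hy).1.trans_eq (nndist_eq_nnnorm y x)
  have h2r : (0 : ℝ≥0) < 2 * r := by positivity
  -- the Lipschitz constant `1/r` is `2` times the lower bound `1/(2r)` of `1/|x - y|`
  have hconst : ((r⁻¹ : ℝ≥0) : ℝ≥0∞) ^ d = 2 ^ d * ((2 * r : ℝ≥0) : ℝ≥0∞) ^ (-d) := by
    rw [← ENNReal.coe_rpow_of_ne_zero (by positivity), ← ENNReal.coe_rpow_of_ne_zero h2r.ne',
      ← ENNReal.coe_ofNat, ← ENNReal.coe_rpow_of_ne_zero two_ne_zero, ← ENNReal.coe_mul]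
    congr 1
    rw [NNReal.rpow_neg, NNReal.mul_rpow, NNReal.inv_rpow, mul_inv, ← mul_assoc,
      mul_inv_cancel₀ (by positivity), one_mul]
  calc μH[d] ((fun y => NormedSpace.normalize (y - x)) '' s)
      ≤ ((r⁻¹ * 1 : ℝ≥0) : ℝ≥0∞) ^ d * μH[d] s := hlip.hausdorffMeasure_image_le hd
    _ = 2 ^ d * ∫⁻ _ in s, ((2 * r : ℝ≥0) : ℝ≥0∞) ^ (-d) ∂μH[d] := by
      rw [mul_one, hconst, setLIntegral_const, mul_assoc]
    _ ≤ 2 ^ d * ∫⁻ y in s, edist x y ^ (-d) ∂μH[d] := by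
      gcongr 1
      refine setLIntegral_mono' hs fun y hy => ?_
      rw [ENNReal.rpow_neg, ENNReal.rpow_neg, edist_nndist, nndist_comm]
      gcongr
      exact_mod_cast (hsr y hy).2

lemma hausdorffMeasure_image_normalize_sub_le {d : ℝ} (hd : 0 ≤ d) {x : E} {s : Set E}
    (hs : MeasurableSet s) (hx : x ∉ s) :
    μH[d] ((fun y => NormedSpace.normalize (y - x)) '' s)
      ≤ 2 ^ d * ∫⁻ y in s, edist x y ^ (-d) ∂μH[d] := by
  set A : ℤ → Set E := fun k => s ∩ (fun y => nndist y x) ⁻¹' Ico (2 ^ k) (2 ^ (k + 1))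
  have hAm : ∀ k, MeasurableSet (A k) := fun k =>
    hs.inter ((continuous_id.nndist continuous_const).measurable measurableSet_Ico)
  have hA : ⋃ k, A k = s := by
    refine (iUnion_subset fun k => inter_subset_left).antisymm fun y hy => mem_iUnion.2 ?_
    obtain ⟨k, hk⟩ :=
      NNReal.exists_mem_Ico_zpow (nndist_eq_zero.not.2 (ne_of_mem_of_not_mem hy hx)) one_lt_two
    exact ⟨k, hy, hk⟩
  have hdisj : Pairwise (Function.onFun Disjoint A) := fun j k hjk =>
    ((zpow_right_mono₀ (one_le_two : (1 : ℝ≥0) ≤ 2)).pairwise_disjoint_on_Ico_succ hjk).preimage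
      _ |>.mono inter_subset_right inter_subset_right
  calc μH[d] ((fun y => NormedSpace.normalize (y - x)) '' s)
      = μH[d] (⋃ k, (fun y => NormedSpace.normalize (y - x)) '' A k) := by
        rw [← image_iUnion, hA]
    _ ≤ ∑' k, μH[d] ((fun y => NormedSpace.normalize (y - x)) '' A k) := measure_iUnion_le _
    _ ≤ ∑' k, 2 ^ d * ∫⁻ y in A k, edist x y ^ (-d) ∂μH[d] :=
        ENNReal.tsum_le_tsum fun k =>
          hausdorffMeasure_image_normalize_sub_le_of_subset_annulus hd x (zpow_pos two_pos k)
            (hAm k) fun y hy =>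
              ⟨hy.2.1, hy.2.2.le.trans_eq (by rw [zpow_add_one₀ two_ne_zero, mul_comm])⟩
    _ = 2 ^ d * ∫⁻ y in s, edist x y ^ (-d) ∂μH[d] := by
        rw [ENNReal.tsum_mul_left, ← lintegral_iUnion hAm hdisj, hA]

theorem setLIntegral_le_of_radial_values {d : ℝ} (hd : 0 ≤ d) {x : E}
    {F S : Set E} (hF : MeasurableSet F) (hxF : x ∉ F) (hS : MeasurableSet S) {g : E → ℝ}
    (hg : Measurable g) {φ : E → ℝ≥0∞}
    (hφ : ∀ θ ∈ S, φ θ = 0 ∨ ∃ y ∈ F, NormedSpace.normalize (y - x) = θ ∧ φ θ = ‖g y‖₊) :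
    ∫⁻ θ in S, φ θ ∂μH[d] ≤ 2 ^ d * ∫⁻ y in F, ‖g y‖₊ * edist x y ^ (-d) ∂μH[d] := by
  have hφ_ofReal : ∀ θ ∈ S, φ θ = ENNReal.ofReal (φ θ).toReal := fun θ hθ =>
    (ENNReal.ofReal_toReal (by rcases hφ θ hθ with h | ⟨y, -, -, h⟩ <;> simp [h])).symm
  have hlevel : ∀ t > 0, S ∩ {θ | t < (φ θ).toReal}
      ⊆ (fun y => NormedSpace.normalize (y - x)) '' ({y | t < ‖g y‖} ∩ F) := by
    rintro t ht θ ⟨hθS, hθt⟩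
    rcases hφ θ hθS with h0 | ⟨y, hyF, rfl, hy⟩
    · simp only [mem_ofPred_eq, h0, ENNReal.toReal_zero] at hθt
      exact absurd ht hθt.not_gt
    · exact ⟨y, ⟨by simpa [hy] using hθt, hyF⟩, rfl⟩
  calc ∫⁻ θ in S, φ θ ∂μH[d] = ∫⁻ θ in S, ENNReal.ofReal (φ θ).toReal ∂μH[d] :=
        setLIntegral_congr_fun hS hφ_ofReal
    _ ≤ ∫⁻ y, ENNReal.ofReal ‖g y‖
          ∂((2 : ℝ≥0∞) ^ d • (μH[d].restrict F).withDensity fun y => edist x y ^ (-d)) := by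
        refine lintegral_ofReal_le_of_meas_lt_le (fun _ => norm_nonneg _) hg.norm fun t ht => ?_
        have hmeas : MeasurableSet {y | t < ‖g y‖} := measurableSet_lt measurable_const hg.norm
        rw [Measure.restrict_apply' hS, inter_comm, Measure.smul_apply, smul_eq_mul,
          withDensity_apply _ hmeas, Measure.restrict_restrict hmeas]
        exact (measure_mono (hlevel t ht)).trans
          (hausdorffMeasure_image_normalize_sub_le hd (hmeas.inter hF) fun h => hxF h.2)
    _ = 2 ^ d * ∫⁻ y in F, ‖g y‖₊ * edist x y ^ (-d) ∂μH[d] := by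
        rw [lintegral_smul_measure, smul_eq_mul,
          lintegral_withDensity_eq_lintegral_mul _ (by fun_prop) hg.norm.ennreal_ofReal]
        simp only [ofReal_norm, enorm_eq_nnnorm, Pi.mul_apply, mul_comm]

end RadialProjection

/-- `h x θ` is `|g(ζ(x,θ))|`, the value of `|g|` at the first intersection `ζ(x,θ)` of the ray
`{x + tθ : t > 0}` with `∂Ω`, and `0` when the ray never meets `∂Ω`. -/
theorem stmt11 {n : ℕ} (hn : 2 ≤ n) (Ω : Set (EuclideanSpace ℝ (Fin n))) (hΩ : IsOpen Ω)
    (g : EuclideanSpace ℝ (Fin n) → ℝ) (hg : Measurable g)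
    (h : EuclideanSpace ℝ (Fin n) → EuclideanSpace ℝ (Fin n) → ℝ≥0∞)
    (hray : ∀ x ∈ Ω, ∀ θ ∈ Metric.sphere (0 : EuclideanSpace ℝ (Fin n)) 1,
      (∃ t : ℝ, 0 < t ∧ x + t • θ ∈ frontier Ω) →
        ∃ t : ℝ, 0 < t ∧ x + t • θ ∈ frontier Ω ∧ (∀ s ∈ Ioo (0:ℝ) t, x + s • θ ∈ Ω) ∧
          h x θ = (‖g (x + t • θ)‖₊ : ℝ≥0∞))
    (hray0 : ∀ x ∈ Ω, ∀ θ ∈ Metric.sphere (0 : EuclideanSpace ℝ (Fin n)) 1,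
      (¬ ∃ t : ℝ, 0 < t ∧ x + t • θ ∈ frontier Ω) → h x θ = 0) :
    ∀ᵐ x ∂(volume.restrict Ω),
      (∫⁻ θ in Metric.sphere (0 : EuclideanSpace ℝ (Fin n)) 1, h x θ ∂μH[(n:ℝ) - 1])
        ≤ 2 ^ n * ∫⁻ y in frontier Ω,
            (‖g y‖₊ : ℝ≥0∞) * edist x y ^ (-((n:ℝ) - 1)) ∂μH[(n:ℝ) - 1] := by
  filter_upwards [ae_restrict_mem hΩ.measurableSet] with x hx
  have hd : (0 : ℝ) ≤ n - 1 := by linarith [show (2 : ℝ) ≤ n by exact_mod_cast hn]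
  have hxF : x ∉ frontier Ω := by
    rw [hΩ.frontier_eq]
    exact fun h' => h'.2 hx
  have hvalues : ∀ θ ∈ Metric.sphere (0 : EuclideanSpace ℝ (Fin n)) 1, h x θ = 0 ∨
      ∃ y ∈ frontier Ω, NormedSpace.normalize (y - x) = θ ∧ h x θ = ‖g y‖₊ := by
    intro θ hθ
    by_cases hhit : ∃ t : ℝ, 0 < t ∧ x + t • θ ∈ frontier Ω
    · obtain ⟨t, ht, htF, -, hval⟩ := hray x hx θ hθ hhit
      refine Or.inr ⟨x + t • θ, htF, ?_, hval⟩
      rw [add_sub_cancel_left, NormedSpace.normalize_smul_of_pos ht,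
        NormedSpace.normalize_eq_self_of_norm_eq_one (mem_sphere_zero_iff_norm.1 hθ)]
    · exact Or.inl (hray0 x hx θ hθ hhit)
  calc _ ≤ 2 ^ ((n : ℝ) - 1) * _ :=
        setLIntegral_le_of_radial_values hd isClosed_frontier.measurableSet hxF
          Metric.isClosed_sphere.measurableSet hg hvalues
    _ ≤ _ := by
        gcongr
        rw [← ENNReal.rpow_natCast]
        exact ENNReal.rpow_le_rpow_of_exponent_le one_le_two (by linarith)
end

section
/- Let ℓ ≥ 1 and let 𝒫(y) = Σ_{|α| ≤ 2ℓ−2} b_α (y−x)^α be any polynomial of degree at most 2ℓ−2 on ℝⁿ. Then for all y ≠ x: Σ_{|α| ≤ ℓ−1} [(2ℓ−2−|α|)! / ((ℓ−1−|α|)! α!)] · (y−x)^α / |y−x|^{2ℓ−1} · [(−1)^{|α|} D^α 𝒫(y) − D^α 𝒫(x)] = 0. -/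
/-!
Write `L = ℓ - 1`. The hypotheses force `U α` to be the termwise derivative `D^α 𝒫`, so the
identity is linear in the coefficients `b` and it suffices to treat one monomial `(y - x)^β` with
`|β| ≤ 2L`. For it, `(y - x)^α D^α (y - x)^β = α! ∏ᵢ C(βᵢ, αᵢ) (y - x)^β`, and grouping the
multi-indices by `k = |α|` the multivariate Vandermonde identity turns the terms at `y` into
`(y - x)^β Σ_{k ≤ L} (-1)^k C(|β|, k) (2L - k)!/(L - k)!`. This one-variable sum is
`(2L - |β|)!/(L - |β|)!` if `|β| ≤ L` and `0` otherwise, which is exactly the contribution of the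
terms at `x`, where `D^α (y - x)^β` vanishes unless `α = β`.
-/

open Set Finset

def mIdxLe (n d : ℕ) : Finset (Fin n → ℕ) :=
  ((Finset.univ : Finset (Fin n → Fin (d+1))).image fun a i => ((a i : ℕ))).filter
    fun α => ∑ i, α i ≤ d

open Nat

open Polynomial in
theorem sum_range_neg_one_pow_mul_choose_mul_choose {m N : ℕ} (L : ℕ) (hm : m ≤ N) :
    ∑ k ∈ range (N + 1), (-1 : ℤ) ^ k * m.choose k * (N - k).choose L =
      if m ≤ L then ((N - m).choose (L - m) : ℤ) else 0 := by
  have hX : (1 + X : ℤ[X]) ^ (N - m) * X ^ m =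
      ∑ k ∈ range (N + 1), C ((-1 : ℤ) ^ k * m.choose k) * (1 + X) ^ (N - k) := by
    have h := add_pow (-1 : ℤ[X]) (1 + X) m
    rw [neg_add_cancel_left] at h
    rw [h, Finset.mul_sum, ← Finset.sum_subset (range_subset_range.2 (by omega : m + 1 ≤ N + 1))]
    · refine Finset.sum_congr rfl fun k hk => ?_
      have hk : k ≤ m := Nat.lt_succ_iff.1 (mem_range.1 hk)
      rw [show N - k = (N - m) + (m - k) by omega, pow_add]
      simp only [map_mul, map_pow, map_neg, map_one, map_natCast]
      ring
    · intro k _ hk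
      rw [Nat.choose_eq_zero_of_lt (by simpa using hk)]
      simp
  have := congrArg (fun p => Polynomial.coeff p L) hX
  simp only [coeff_mul_X_pow', coeff_one_add_X_pow, finsetSum_coeff, coeff_C_mul] at this
  rw [this]

theorem factorial_div_factorial_eq_factorial_mul_choose {n j : ℕ} (L : ℕ) (h : n = j + L) :
    (n ! : ℝ) / (j ! : ℝ) = (L ! : ℝ) * n.choose L := by
  subst h
  rw [div_eq_iff (by positivity), ← Nat.add_choose_mul_factorial_mul_factorial j L]
  push_cast; ring

theorem sum_range_neg_one_pow_mul_factorial_div_mul_choose (L : ℕ) {m : ℕ} (hm : m ≤ 2 * L) :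
    ∑ k ∈ range (L + 1), (-1 : ℝ) ^ k * ((2 * L - k) ! / (L - k) ! : ℝ) * m.choose k =
      if m ≤ L then ((2 * L - m) ! / (L - m) ! : ℝ) else 0 := by
  calc ∑ k ∈ range (L + 1), (-1 : ℝ) ^ k * ((2 * L - k) ! / (L - k) ! : ℝ) * m.choose k
      = (L ! : ℝ) * ∑ k ∈ range (2 * L + 1),
          (((-1 : ℤ) ^ k * m.choose k * (2 * L - k).choose L : ℤ) : ℝ) := by
        rw [Finset.mul_sum,
          ← Finset.sum_subset (range_subset_range.2 (by omega : L + 1 ≤ 2 * L + 1))]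
        · refine Finset.sum_congr rfl fun k hk => ?_
          rw [factorial_div_factorial_eq_factorial_mul_choose L (by simp at hk; omega)]
          push_cast; ring
        · intro k hk hk'
          simp only [Finset.mem_range, not_lt] at hk hk'
          rw [Nat.choose_eq_zero_of_lt (n := 2 * L - k) (by omega)]
          simp
    _ = _ := by
        rw [← Int.cast_sum, sum_range_neg_one_pow_mul_choose_mul_choose L hm]
        split_ifs with h
        · rw [factorial_div_factorial_eq_factorial_mul_choose L (by omega),
            Nat.choose_symm_of_eq_add (b := L) (by omega)]
          push_cast; ring
        · simp

theorem Finset.sum_piAntidiag_prod_choose {ι : Type*} [DecidableEq ι] (s : Finset ι)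
    (β : ι → ℕ) (k : ℕ) :
    ∑ α ∈ s.piAntidiag k, ∏ i ∈ s, (β i).choose (α i) = (∑ i ∈ s, β i).choose k := by
  induction s using Finset.cons_induction generalizing k with
  | empty => cases k <;> simp
  | cons i s hi ih =>
    rw [piAntidiag_cons hi, sum_disjiUnion, sum_cons, Nat.add_choose_eq]
    refine sum_congr rfl fun p _ => ?_
    rw [sum_map, ← ih, Finset.mul_sum]
    refine sum_congr rfl fun f hf => ?_
    have hfi : f i = 0 := by
      by_contra h
      exact hi ((mem_piAntidiag.1 hf).2 i h)
    rw [prod_cons]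
    congr 1
    · simp [hfi]
    · refine prod_congr rfl fun j hj => ?_
      simp [show j ≠ i by rintro rfl; exact hi hj]

theorem mem_mIdxLe {n d : ℕ} {α : Fin n → ℕ} : α ∈ mIdxLe n d ↔ ∑ i, α i ≤ d := by
  simp only [mIdxLe, Finset.mem_filter, Finset.mem_image, Finset.mem_univ, true_and,
    and_iff_right_iff_imp]
  intro h
  refine ⟨fun i => ⟨α i, ?_⟩, rfl⟩
  have := single_le_sum (fun j _ => Nat.zero_le (α j)) (mem_univ i) (f := α)
  omega

theorem sum_mIdxLe_eq_sum_range_sum_piAntidiag {M : Type*} [AddCommMonoid M] (n d : ℕ)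
    (g : (Fin n → ℕ) → M) :
    ∑ α ∈ mIdxLe n d, g α = ∑ k ∈ range (d + 1), ∑ α ∈ univ.piAntidiag k, g α := by
  rw [← sum_fiberwise_of_maps_to (g := fun α : Fin n → ℕ => ∑ i, α i) (t := range (d + 1))
    fun α hα => Finset.mem_range.2 (Nat.lt_succ_of_le (mem_mIdxLe.1 hα))]
  refine sum_congr rfl fun k hk => sum_congr ?_ fun _ _ => rfl
  ext α
  have := Finset.mem_range.1 hk
  simp only [Finset.mem_filter, mem_mIdxLe, mem_piAntidiag, Finset.mem_univ, implies_true,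
    and_true]
  exact ⟨And.right, fun h => ⟨h.trans_le (Nat.lt_succ_iff.1 this), h⟩⟩

theorem sum_mIdxLe_mul_prod_choose (n d : ℕ) (β : Fin n → ℕ) (f : ℕ → ℝ) :
    ∑ α ∈ mIdxLe n d, f (∑ i, α i) * ∏ i, ((β i).choose (α i) : ℝ) =
      ∑ k ∈ range (d + 1), f k * (∑ i, β i).choose k := by
  rw [sum_mIdxLe_eq_sum_range_sum_piAntidiag]
  refine sum_congr rfl fun k _ => ?_
  rw [← sum_piAntidiag_prod_choose, Nat.cast_sum, Finset.mul_sum]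
  refine sum_congr rfl fun α hα => ?_
  rw [(mem_piAntidiag.1 hα).1]
  push_cast; rfl

section MonomialDeriv

variable {ι : Type*} [Fintype ι]

def monomialDeriv (β α : ι → ℕ) (z : ι → ℝ) : ℝ :=
  ∏ i, ((β i).descFactorial (α i) : ℝ) * z i ^ (β i - α i)

theorem pow_mul_descFactorial_mul_pow (z : ℝ) (a b : ℕ) :
    z ^ a * (b.descFactorial a * z ^ (b - a)) = (a ! : ℝ) * b.choose a * z ^ b := by
  rcases le_or_gt a b with h | h
  · rw [Nat.descFactorial_eq_factorial_mul_choose, ← pow_mul_pow_sub z h]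
    push_cast; ring
  · simp [Nat.choose_eq_zero_of_lt h, Nat.descFactorial_eq_zero_iff_lt.2 h]

theorem prod_pow_mul_monomialDeriv (β α : ι → ℕ) (z : ι → ℝ) :
    (∏ i, z i ^ α i) * monomialDeriv β α z =
      (∏ i, ((α i) ! : ℝ)) * (∏ i, ((β i).choose (α i) : ℝ)) * ∏ i, z i ^ β i := by
  simp only [monomialDeriv, ← prod_mul_distrib, pow_mul_descFactorial_mul_pow]

theorem monomialDeriv_apply_zero [DecidableEq ι] (β α : ι → ℕ) :
    monomialDeriv β α 0 = if α = β then ∏ i, ((β i) ! : ℝ) else 0 := by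
  have factor : ∀ a b : ℕ,
      (b.descFactorial a : ℝ) * (0 : ℝ) ^ (b - a) = if a = b then (b ! : ℝ) else 0 := by
    intro a b
    rcases lt_trichotomy a b with h | rfl | h
    · simp [h.ne, zero_pow (Nat.sub_ne_zero_of_lt h)]
    · simp [Nat.descFactorial_self]
    · simp [h.ne', Nat.descFactorial_eq_zero_iff_lt.2 h]
  simp only [monomialDeriv, Pi.zero_apply, factor, Fintype.prod_ite_zero, funext_iff]

theorem hasDerivAt_descFactorial_mul_pow (b a : ℕ) (c : ℝ) :
    HasDerivAt (fun t : ℝ => (b.descFactorial a : ℝ) * (c + t) ^ (b - a))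
      ((b.descFactorial (a + 1) : ℝ) * c ^ (b - (a + 1))) 0 := by
  have h : HasDerivAt (fun t : ℝ => (b.descFactorial a : ℝ) * (c + t) ^ (b - a))
      ((b.descFactorial a : ℝ) * ((b - a : ℕ) * (c + 0) ^ (b - a - 1) * 1)) 0 :=
    (((hasDerivAt_id (0 : ℝ)).const_add c).pow (b - a)).const_mul _
  refine h.congr_deriv ?_
  rw [Nat.descFactorial_succ, Nat.sub_add_eq]
  push_cast
  ring

theorem hasDerivAt_monomialDeriv [DecidableEq ι] (β α : ι → ℕ) (z : ι → ℝ) (i : ι) :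
    HasDerivAt (fun t : ℝ => monomialDeriv β α (z + t • Pi.single i 1))
      (monomialDeriv β (α + Pi.single i 1) z) 0 := by
  set rest := ∏ j ∈ univ.erase i, ((β j).descFactorial (α j) : ℝ) * z j ^ (β j - α j)
  have split : ∀ (γ : ι → ℕ) (w : ι → ℝ), (∀ j ≠ i, γ j = α j ∧ w j = z j) →
      monomialDeriv β γ w = ((β i).descFactorial (γ i) : ℝ) * w i ^ (β i - γ i) * rest := by
    intro γ w h
    rw [monomialDeriv, ← mul_prod_erase _ _ (mem_univ i)]
    congr 1
    refine prod_congr rfl fun j hj => ?_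
    rw [(h j (mem_erase.1 hj).1).1, (h j (mem_erase.1 hj).1).2]
  have hline : (fun t : ℝ => monomialDeriv β α (z + t • Pi.single i 1)) =
      fun t => ((β i).descFactorial (α i) : ℝ) * (z i + t) ^ (β i - α i) * rest := by
    funext t
    rw [split _ _ fun j hj => ⟨rfl, by simp [hj]⟩]
    simp
  rw [hline, split _ _ fun j hj => ⟨by simp [hj], rfl⟩]
  simpa using (hasDerivAt_descFactorial_mul_pow (β i) (α i) (z i)).mul_const rest

end MonomialDeriv

theorem eq_of_hasDerivAt_add_single {ι E : Type*} [Fintype ι] [DecidableEq ι] [Add E] [SMul ℝ E]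
    (v : ι → E) {U V : (ι → ℕ) → E → ℝ} (h0 : U 0 = V 0)
    (hU : ∀ α i y, HasDerivAt (fun t : ℝ => U α (y + t • v i)) (U (α + Pi.single i 1) y) 0)
    (hV : ∀ α i y, HasDerivAt (fun t : ℝ => V α (y + t • v i)) (V (α + Pi.single i 1) y) 0)
    (α : ι → ℕ) : U α = V α := by
  obtain rfl | ⟨i, hi⟩ := eq_or_ne α 0 |>.imp id Function.ne_iff.1
  · exact h0
  have hle : Pi.single i 1 ≤ α := fun j => by
    rcases eq_or_ne j i with rfl | hj
    · simpa [Nat.one_le_iff_ne_zero] using hi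
    · simp [hj]
  have ih := eq_of_hasDerivAt_add_single v h0 hU hV (α - Pi.single i 1)
  funext y
  rw [← tsub_add_cancel_of_le hle]
  exact (hU _ i y).unique (ih ▸ hV _ i y)
termination_by ∑ i, α i
decreasing_by
  have hsum := congrArg (fun f : ι → ℕ => ∑ j, f j) (tsub_add_cancel_of_le hle)
  simp only [Pi.add_apply, sum_add_distrib, Finset.sum_pi_single', Finset.mem_univ, if_true] at hsum
  omega

noncomputable def diffQuotCoeff {n : ℕ} (L : ℕ) (α : Fin n → ℕ) : ℝ :=
  ((2 * L - ∑ i, α i) ! : ℝ) / (((L - ∑ i, α i) ! : ℝ) * ∏ i, ((α i) ! : ℝ))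

theorem diffQuotCoeff_mul_prod_factorial {n : ℕ} (L : ℕ) (α : Fin n → ℕ) :
    diffQuotCoeff L α * ∏ i, ((α i) ! : ℝ) = ((2 * L - ∑ i, α i) ! : ℝ) / (L - ∑ i, α i) ! := by
  rw [diffQuotCoeff, ← div_div, div_mul_cancel₀]
  exact prod_ne_zero_iff.2 fun i _ => by positivity

theorem sum_mIdxLe_mul_monomialDeriv_sub_eq_zero {n L : ℕ} {β : Fin n → ℕ}
    (hβ : ∑ i, β i ≤ 2 * L) (z : Fin n → ℝ) :
    ∑ α ∈ mIdxLe n L, diffQuotCoeff L α * (∏ i, z i ^ α i) *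
      ((-1 : ℝ) ^ (∑ i, α i) * monomialDeriv β α z - monomialDeriv β α 0) = 0 := by
  have hterm : ∀ α : Fin n → ℕ, diffQuotCoeff L α * (∏ i, z i ^ α i) *
        ((-1 : ℝ) ^ (∑ i, α i) * monomialDeriv β α z - monomialDeriv β α 0) =
      (-1 : ℝ) ^ (∑ i, α i) * ((2 * L - ∑ i, α i) ! / (L - ∑ i, α i) ! : ℝ) *
          (∏ i, ((β i).choose (α i) : ℝ)) * ∏ i, z i ^ β i -
        if α = β then ((2 * L - ∑ i, β i) ! / (L - ∑ i, β i) ! : ℝ) * ∏ i, z i ^ β i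
        else 0 := fun α => by
    have hpow := prod_pow_mul_monomialDeriv β α z
    have hcoeff := diffQuotCoeff_mul_prod_factorial L α
    rw [monomialDeriv_apply_zero]
    split_ifs with h
    · subst h
      linear_combination (-1 : ℝ) ^ (∑ i, α i) * diffQuotCoeff L α * hpow +
        ((-1 : ℝ) ^ (∑ i, α i) * (∏ i, ((α i).choose (α i) : ℝ)) - 1) * (∏ i, z i ^ α i) * hcoeff
    · linear_combination (-1 : ℝ) ^ (∑ i, α i) * diffQuotCoeff L α * hpow +
        (-1 : ℝ) ^ (∑ i, α i) * (∏ i, ((β i).choose (α i) : ℝ)) * (∏ i, z i ^ β i) * hcoeff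
  rw [sum_congr rfl fun α _ => hterm α, sum_sub_distrib, sum_ite_eq', ← sum_mul,
    sum_mIdxLe_mul_prod_choose n L β fun k => (-1 : ℝ) ^ k * ((2 * L - k) ! / (L - k) ! : ℝ),
    sum_range_neg_one_pow_mul_factorial_div_mul_choose L hβ]
  simp only [mem_mIdxLe, ite_mul, zero_mul, sub_self]

theorem sum_mIdxLe_mul_sum_monomialDeriv_sub_eq_zero {n : ℕ} (L : ℕ) (b : (Fin n → ℕ) → ℝ)
    (z : Fin n → ℝ) :
    ∑ α ∈ mIdxLe n L, diffQuotCoeff L α * (∏ i, z i ^ α i) *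
      ((-1 : ℝ) ^ (∑ i, α i) * ∑ β ∈ mIdxLe n (2 * L), b β * monomialDeriv β α z -
        ∑ β ∈ mIdxLe n (2 * L), b β * monomialDeriv β α 0) = 0 := by
  calc _ = ∑ β ∈ mIdxLe n (2 * L), b β * ∑ α ∈ mIdxLe n L, diffQuotCoeff L α *
          (∏ i, z i ^ α i) *
          ((-1 : ℝ) ^ (∑ i, α i) * monomialDeriv β α z - monomialDeriv β α 0) := by
        simp only [Finset.mul_sum, ← sum_sub_distrib]
        rw [sum_comm]
        exact sum_congr rfl fun _ _ => sum_congr rfl fun _ _ => by ring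
    _ = 0 := sum_eq_zero fun β hβ => by
        rw [sum_mIdxLe_mul_monomialDeriv_sub_eq_zero (mem_mIdxLe.1 hβ), mul_zero]

theorem coord_sub_add_smul_single {n : ℕ} (x y : EuclideanSpace ℝ (Fin n)) (t : ℝ) (i : Fin n) :
    (fun j => (y + t • EuclideanSpace.single i (1 : ℝ)) j - x j) =
      (fun j => y j - x j) + t • Pi.single i 1 := by
  ext j
  rcases eq_or_ne j i with rfl | hj
  · simp; ring
  · simp [hj]

theorem hasDerivAt_sum_monomialDeriv {n : ℕ} (s : Finset (Fin n → ℕ)) (b : (Fin n → ℕ) → ℝ)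
    (x : EuclideanSpace ℝ (Fin n)) (α : Fin n → ℕ) (i : Fin n) (y : EuclideanSpace ℝ (Fin n)) :
    HasDerivAt
      (fun t : ℝ => ∑ β ∈ s, b β *
        monomialDeriv β α (fun j => (y + t • EuclideanSpace.single i (1 : ℝ)) j - x j))
      (∑ β ∈ s, b β * monomialDeriv β (α + Pi.single i 1) (fun j => y j - x j)) 0 := by
  simp only [coord_sub_add_smul_single]
  exact HasDerivAt.fun_sum fun β _ => (hasDerivAt_monomialDeriv β α _ i).const_mul (b β)

theorem stmt16_general {n ℓ : ℕ}
    (x : EuclideanSpace ℝ (Fin n)) (b : (Fin n → ℕ) → ℝ)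
    (U : (Fin n → ℕ) → EuclideanSpace ℝ (Fin n) → ℝ)
    (hU0 : U 0 = fun y => ∑ β ∈ mIdxLe n (2*ℓ-2), b β * ∏ i, (y i - x i) ^ (β i))
    (hUd : ∀ (α : Fin n → ℕ) (i : Fin n) (y : EuclideanSpace ℝ (Fin n)),
      HasDerivAt (fun t : ℝ => U α (y + t • EuclideanSpace.single i (1:ℝ)))
        (U (α + Pi.single i 1) y) 0) :
    ∀ y : EuclideanSpace ℝ (Fin n), y ≠ x →
      ∑ α ∈ mIdxLe n (ℓ-1),
        (Nat.factorial (2*ℓ-2-(∑ i, α i)) : ℝ) /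
            ((Nat.factorial (ℓ-1-(∑ i, α i)) : ℝ) * ∏ i, (Nat.factorial (α i) : ℝ)) *
          (∏ i, (y i - x i) ^ (α i)) / ‖y - x‖ ^ (2*ℓ-1) *
          ((-1:ℝ) ^ (∑ i, α i) * U α y - U α x) = 0 := by
  intro y _
  rw [show 2 * ℓ - 2 = 2 * (ℓ - 1) by omega] at hU0 ⊢
  have hU : ∀ α, U α = fun y =>
      ∑ β ∈ mIdxLe n (2 * (ℓ - 1)), b β * monomialDeriv β α (fun j => y j - x j) :=
    eq_of_hasDerivAt_add_single (fun i => EuclideanSpace.single i (1 : ℝ))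
      (by rw [hU0]; simp [monomialDeriv]) hUd (hasDerivAt_sum_monomialDeriv _ b x)
  simp only [div_mul_eq_mul_div _ (‖y - x‖ ^ _), ← sum_div, hU, sub_self, ← Pi.zero_def]
  exact div_eq_zero_iff.2 (.inl (sum_mIdxLe_mul_sum_monomialDeriv_sub_eq_zero (ℓ - 1) b _))

/-- Algebraic cancellation identity: for any polynomial 𝒫 of degree ≤ 2ℓ−2 on ℝⁿ
(with D^α 𝒫 encoded by the family U of iterated directional derivatives),
Σ_{|α|≤ℓ−1} [(2ℓ−2−|α|)!/((ℓ−1−|α|)! α!)] (y−x)^α |y−x|^{1−2ℓ}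
  [(−1)^{|α|} D^α 𝒫(y) − D^α 𝒫(x)] = 0 for all y ≠ x. -/
theorem stmt16 {n ℓ : ℕ} (hn : 1 ≤ n) (hℓ : 1 ≤ ℓ)
    (x : EuclideanSpace ℝ (Fin n)) (b : (Fin n → ℕ) → ℝ)
    (U : (Fin n → ℕ) → EuclideanSpace ℝ (Fin n) → ℝ)
    (hU0 : U 0 = fun y => ∑ β ∈ mIdxLe n (2*ℓ-2), b β * ∏ i, (y i - x i) ^ (β i))
    (hUd : ∀ (α : Fin n → ℕ) (i : Fin n) (y : EuclideanSpace ℝ (Fin n)),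
      HasDerivAt (fun t : ℝ => U α (y + t • EuclideanSpace.single i (1:ℝ)))
        (U (α + Pi.single i 1) y) 0) :
    ∀ y : EuclideanSpace ℝ (Fin n), y ≠ x →
      ∑ α ∈ mIdxLe n (ℓ-1),
        (Nat.factorial (2*ℓ-2-(∑ i, α i)) : ℝ) /
            ((Nat.factorial (ℓ-1-(∑ i, α i)) : ℝ) * ∏ i, (Nat.factorial (α i) : ℝ)) *
          (∏ i, (y i - x i) ^ (α i)) / ‖y - x‖ ^ (2*ℓ-1) *
          ((-1:ℝ) ^ (∑ i, α i) * U α y - U α x) = 0 :=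
  stmt16_general x b U hU0 hUd
end
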